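/- arXiv:1706.05397 — 6 statements merged into one kernel-verified Lean document; each statement's English description precedes it below -/
import Mathlib

section
/- Let β > 0 and for each real λ > 0 let s_λ be a positive integer with s_λ > λ such that √(s_λ)·(1 − λ/s_λ) → β as λ → ∞. Then P(Pois(λ) < s_λ) → Φ(β) as λ → ∞, where Pois(λ) is a Poisson random variable with mean λ. -/
open Filter MeasureTheory

/-- Standard normal probability density function. -/
noncomputable def stdGaussianPDF (x : ℝ) : ℝ :=
  Real.exp (-x ^ 2 / 2) / Real.sqrt (2 * Real.pi)

/-- Standard normal cumulative distribution function. -/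
noncomputable def stdGaussianCDF (x : ℝ) : ℝ :=
  ∫ t in Set.Iic x, stdGaussianPDF t

/-! If `Γₙ ∼ Gamma(n, 1)` then `P(Pois(λ) < n) = P(Γₙ > λ)`: integrating the Gamma tail by parts
produces the Poisson partial sum. Writing `Γₙ = n + √n Zₙ`, the density of `Zₙ` at `x` equals
`exp (n log (1 + x/√n) - √n x) / ((1 + x/√n) √2 stirlingSeq n)`, which tends to `φ x` by
Stirling's formula and the second-order Taylor expansion of `log (1 + u)`, and is dominated by
`2 exp ((1 - x)/4)` on `x ≥ -√n / 2`. Since `(λ - s_λ)/√s_λ → -β`, dominated convergence gives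
`P(Zₙ > (λ - s_λ)/√s_λ) → ∫_{-β}^∞ φ = Φ(β)`. -/

open Real Set Topology
open scoped Nat

theorem integrableOn_Ioi_pow_mul_exp_neg (n : ℕ) (a : ℝ) :
    IntegrableOn (fun t : ℝ => t ^ n * exp (-t)) (Ioi a) := by
  refine integrable_of_isBigO_exp_neg (b := 1 / 2) (by norm_num) (by fun_prop) ?_
  have h := (isLittleO_pow_exp_pos_mul_atTop n (b := 1 / 2) (by norm_num)).isBigO.mul
    (Asymptotics.isBigO_refl (fun t : ℝ => exp (-t)) atTop)
  refine h.congr_right fun t => ?_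
  rw [← exp_add]; ring_nf

theorem integral_Ioi_pow_mul_exp_neg (n : ℕ) (a : ℝ) :
    ∫ t in Ioi a, t ^ n * exp (-t) = n ! * ∑ k ∈ Finset.range (n + 1), exp (-a) * a ^ k / k ! := by
  induction n with
  | zero => simp [integral_exp_Iic]
  | succ n ih =>
    have hint := integrableOn_Ioi_pow_mul_exp_neg n a
    have hint' := integrableOn_Ioi_pow_mul_exp_neg (n + 1) a
    have hparts : ∫ t in Ioi a, (t ^ (n + 1) * exp (-t) - (n + 1) * (t ^ n * exp (-t)))
        = 0 - -(a ^ (n + 1) * exp (-a)) := by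
      refine integral_Ioi_of_hasDerivAt_of_tendsto' (f := fun t => -(t ^ (n + 1) * exp (-t)))
        (fun x _ => ?_) (hint'.sub (hint.const_mul _)) ?_
      · have hpow : HasDerivAt (fun t : ℝ => t ^ (n + 1)) ((n + 1) * x ^ n) x := by
          simpa using hasDerivAt_pow (n + 1) x
        convert (hpow.fun_mul (hasDerivAt_neg x).exp).fun_neg using 1
        ring
      · simpa using (tendsto_pow_mul_exp_neg_atTop_nhds_zero (n + 1)).neg
    rw [integral_sub hint' (hint.const_mul _), integral_const_mul, ih] at hparts
    rw [eq_add_of_sub_eq hparts, Finset.sum_range_succ _ (n + 1), Nat.factorial_succ]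
    push_cast
    field_simp
    ring

theorem integral_Ioi_comp_add_mul (g : ℝ → ℝ) (a b : ℝ) {c : ℝ} (hc : 0 < c) :
    ∫ x in Ioi a, g (b + c * x) = c⁻¹ * ∫ t in Ioi (b + c * a), g t := by
  rw [integral_comp_mul_left_Ioi (fun y => g (b + y)) a hc, smul_eq_mul,
    ← integral_indicator measurableSet_Ioi, ← integral_indicator measurableSet_Ioi,
    ← integral_add_left_eq_self b (f := (Ioi (b + c * a)).indicator g)]
  congr 2 with y
  simp only [indicator_apply, mem_Ioi, add_lt_add_iff_left]

theorem abs_log_one_add_sub_le {u : ℝ} (hu : |u| ≤ 1 / 2) :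
    |log (1 + u) - (u - u ^ 2 / 2)| ≤ 2 * |u| ^ 3 := by
  have h := abs_log_sub_add_sum_range_le (x := -u) (by rw [abs_neg]; linarith) 2
  have h3 : |u| ^ 3 / (1 - |u|) ≤ 2 * |u| ^ 3 := by
    rw [div_le_iff₀ (by linarith)]
    nlinarith [pow_nonneg (abs_nonneg u) 3]
  calc |log (1 + u) - (u - u ^ 2 / 2)|
      = |(∑ i ∈ Finset.range 2, (-u) ^ (i + 1) / (i + 1)) + log (1 - -u)| := by
        simp only [Finset.sum_range_succ, Finset.sum_range_zero, sub_neg_eq_add]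
        congr 1
        push_cast
        ring
    _ ≤ |-u| ^ (2 + 1) / (1 - |-u|) := h
    _ ≤ 2 * |u| ^ 3 := by rw [abs_neg]; exact h3

theorem tendsto_sq_mul_log_one_add_div_sub (x : ℝ) :
    Tendsto (fun t : ℝ => t ^ 2 * log (1 + x / t) - t * x) atTop (𝓝 (-x ^ 2 / 2)) := by
  have hbound : ∀ᶠ t in atTop,
      ‖t ^ 2 * log (1 + x / t) - t * x - -x ^ 2 / 2‖ ≤ 2 * |x| ^ 3 / t := by
    filter_upwards [eventually_gt_atTop 0, eventually_ge_atTop (2 * |x|)] with t ht htx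
    have hu : |x / t| ≤ 1 / 2 := by
      rw [abs_div, abs_of_pos ht, div_le_iff₀ ht]
      linarith
    calc ‖t ^ 2 * log (1 + x / t) - t * x - -x ^ 2 / 2‖
        = t ^ 2 * |log (1 + x / t) - (x / t - (x / t) ^ 2 / 2)| := by
          rw [Real.norm_eq_abs, ← abs_of_pos (pow_pos ht 2), ← abs_mul, abs_of_pos (pow_pos ht 2)]
          congr 1
          field_simp
          ring
      _ ≤ t ^ 2 * (2 * |x / t| ^ 3) := by gcongr; exact abs_log_one_add_sub_le hu
      _ = 2 * |x| ^ 3 / t := by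
          rw [abs_div, abs_of_pos ht]
          field_simp
  exact tendsto_sub_nhds_zero_iff.mp
    (squeeze_zero_norm' hbound (tendsto_const_nhds.div_atTop tendsto_id))

theorem log_one_add_le_sub_sq_div {u : ℝ} (hu : 0 ≤ u) :
    log (1 + u) ≤ u - u ^ 2 / (2 * (1 + u)) := by
  have hu1 : 0 < 1 + u := by linarith
  have h := Real.self_le_sinh_iff.mpr (Real.log_nonneg (by linarith : (1 : ℝ) ≤ 1 + u))
  rw [Real.sinh_log hu1] at h
  calc log (1 + u) ≤ (1 + u - (1 + u)⁻¹) / 2 := h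
    _ = u - u ^ 2 / (2 * (1 + u)) := by field_simp; ring

theorem sq_mul_log_one_add_div_sub_le {t x : ℝ} (ht : 1 ≤ t) (hx : 0 < 1 + x / t) :
    t ^ 2 * log (1 + x / t) - t * x ≤ (1 - x) / 4 := by
  have ht0 : 0 < t := by linarith
  rcases le_or_gt x 0 with hx0 | hx0
  · have hlog : log (1 + x / t) ≤ x / t := by linarith [log_le_sub_one_of_pos hx]
    have : t ^ 2 * log (1 + x / t) ≤ t * x :=
      calc t ^ 2 * log (1 + x / t) ≤ t ^ 2 * (x / t) := by gcongr
        _ = t * x := by field_simp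
    linarith
  · have hquad : (x - 1) / 4 ≤ x ^ 2 / (2 * (1 + x)) := by
      rw [le_div_iff₀ (by positivity)]
      nlinarith
    calc t ^ 2 * log (1 + x / t) - t * x
        ≤ t ^ 2 * (x / t - (x / t) ^ 2 / (2 * (1 + x / t))) - t * x := by
          gcongr
          exact log_one_add_le_sub_sq_div (by positivity)
      _ = -(x ^ 2 / (2 * (1 + x / t))) := by field_simp; ring
      _ ≤ -(x ^ 2 / (2 * (1 + x))) := by
          gcongr
          exact div_le_self hx0.le ht
      _ ≤ (1 - x) / 4 := by linarith

/-- For `T ∼ Gamma(n, 1)`, the density of `(T - n) / √n`; it is only meaningful on the support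
`-√n < x`. -/
noncomputable def standardizedGammaDensity (n : ℕ) (x : ℝ) : ℝ :=
  √n / (n - 1)! * ((n + √n * x) ^ (n - 1) * exp (-(n + √n * x)))

theorem sum_range_poisson_eq_integral_standardizedGammaDensity {n : ℕ} (hn : n ≠ 0) (lam : ℝ) :
    ∑ k ∈ Finset.range n, exp (-lam) * lam ^ k / k ! =
      ∫ x in Ioi ((lam - n) / √n), standardizedGammaDensity n x := by
  obtain ⟨m, rfl⟩ := Nat.exists_eq_add_one_of_ne_zero hn
  have hsqrt : 0 < √((m + 1 : ℕ) : ℝ) := by positivity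
  have hsubst := integral_Ioi_comp_add_mul (fun t => t ^ m * exp (-t))
    ((lam - (m + 1 : ℕ)) / √((m + 1 : ℕ) : ℝ)) ((m + 1 : ℕ) : ℝ) hsqrt
  rw [mul_div_cancel₀ _ hsqrt.ne', add_sub_cancel, integral_Ioi_pow_mul_exp_neg] at hsubst
  simp only [standardizedGammaDensity, Nat.add_sub_cancel]
  rw [integral_const_mul, hsubst]
  field_simp

theorem standardizedGammaDensity_eq {n : ℕ} (hn : n ≠ 0) {x : ℝ} (hx : 0 < 1 + x / √n) :
    standardizedGammaDensity n x =
      exp (√n ^ 2 * log (1 + x / √n) - √n * x) /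
        ((1 + x / √n) * (√2 * Stirling.stirlingSeq n)) := by
  have hsqrt : 0 < √(n : ℝ) := by positivity
  have hsq : √(n : ℝ) ^ 2 = n := sq_sqrt (by positivity)
  have hbase : (n : ℝ) + √n * x = n * (1 + x / √n) := by
    field_simp
    linear_combination x * hsq
  have hexp : exp (-(n + √n * x)) = (exp (√n * x))⁻¹ * (exp 1 ^ n)⁻¹ := by
    rw [← exp_neg, ← exp_nat_mul, mul_one, ← exp_neg, ← exp_add]
    ring_nf
  rw [standardizedGammaDensity, Stirling.stirlingSeq, hexp, hbase, hsq, exp_sub, exp_nat_mul,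
    exp_log hx, sqrt_mul (by norm_num), ← Nat.mul_factorial_pred hn, div_pow, mul_pow]
  generalize 1 + x / √n = u at *
  push_cast
  field_simp
  obtain ⟨m, rfl⟩ := Nat.exists_eq_add_one_of_ne_zero hn
  rw [Nat.add_sub_cancel]
  ring

theorem norm_standardizedGammaDensity_le {n : ℕ} (hn : n ≠ 0) {x : ℝ} (hx : -√n / 2 ≤ x) :
    ‖standardizedGammaDensity n x‖ ≤ 2 * exp ((1 - x) / 4) := by
  have hstirling : 1 ≤ √2 * Stirling.stirlingSeq n :=
    one_le_mul_of_one_le_of_one_le (by simp) <|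
      (one_le_sqrt.mpr (by linarith [pi_gt_three])).trans (Stirling.sqrt_pi_le_stirlingSeq hn)
  have hsqrt : 1 ≤ √(n : ℝ) := one_le_sqrt.mpr (by exact_mod_cast Nat.one_le_iff_ne_zero.mpr hn)
  have hx' : 1 / 2 ≤ 1 + x / √n := by
    rw [← sub_le_iff_le_add', le_div_iff₀ (by positivity)]
    linarith
  rw [standardizedGammaDensity_eq hn (by linarith), Real.norm_of_nonneg (by positivity)]
  calc exp (√n ^ 2 * log (1 + x / √n) - √n * x) / ((1 + x / √n) * (√2 * Stirling.stirlingSeq n))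
      ≤ exp ((1 - x) / 4) / (1 / 2 * 1) := by
        gcongr
        exact sq_mul_log_one_add_div_sub_le hsqrt (by linarith)
    _ = 2 * exp ((1 - x) / 4) := by ring

theorem tendsto_standardizedGammaDensity (x : ℝ) :
    Tendsto (fun n : ℕ => standardizedGammaDensity n x) atTop (𝓝 (stdGaussianPDF x)) := by
  have hsqrt : Tendsto (fun n : ℕ => √(n : ℝ)) atTop atTop :=
    tendsto_sqrt_atTop.comp tendsto_natCast_atTop_atTop
  have hu : Tendsto (fun n : ℕ => 1 + x / √n) atTop (𝓝 1) := by
    simpa using tendsto_const_nhds.add (tendsto_const_nhds.div_atTop hsqrt)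
  have hlim := ((continuous_exp.tendsto _).comp
    ((tendsto_sq_mul_log_one_add_div_sub x).comp hsqrt)).div
    (hu.mul (Stirling.tendsto_stirlingSeq_sqrt_pi.const_mul √2)) (by positivity)
  rw [one_mul, ← sqrt_mul zero_le_two] at hlim
  refine hlim.congr' ?_
  filter_upwards [eventually_ne_atTop 0, hu.eventually (eventually_gt_nhds one_pos)] with n hn hx
  exact (standardizedGammaDensity_eq hn hx).symm

theorem continuous_standardizedGammaDensity (n : ℕ) : Continuous (standardizedGammaDensity n) := by
  unfold standardizedGammaDensity
  fun_prop

theorem tendsto_indicator_Ioi_apply {ι E : Type*} [TopologicalSpace E] [Zero E] {l : Filter ι}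
    {a : ι → ℝ} {α x : ℝ} {F : ι → ℝ → E} {f : ℝ → E} (ha : Tendsto a l (𝓝 α)) (hx : x ≠ α)
    (hF : Tendsto (fun i => F i x) l (𝓝 (f x))) :
    Tendsto (fun i => (Ioi (a i)).indicator (F i) x) l (𝓝 ((Ioi α).indicator f x)) := by
  rcases hx.lt_or_gt with hxα | hαx
  · rw [indicator_of_notMem (show x ∉ Ioi α from not_lt.mpr hxα.le)]
    refine tendsto_const_nhds.congr' ?_
    filter_upwards [ha.eventually (eventually_gt_nhds hxα)] with i hi
    rw [indicator_of_notMem (show x ∉ Ioi (a i) from not_lt.mpr hi.le)]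
  · rw [indicator_of_mem (mem_Ioi.mpr hαx)]
    refine hF.congr' ?_
    filter_upwards [ha.eventually (eventually_lt_nhds hαx)] with i hi
    rw [indicator_of_mem (mem_Ioi.mpr hi)]

theorem integrableOn_Ioi_mul_exp_one_sub_div_four (c a : ℝ) :
    IntegrableOn (fun x => c * exp ((1 - x) / 4)) (Ioi a) := by
  refine IntegrableOn.congr_fun ((exp_neg_integrableOn_Ioi a
    (by norm_num : (0 : ℝ) < 1 / 4)).const_mul (c * exp (1 / 4))) (fun x _ => ?_)
    measurableSet_Ioi
  rw [mul_assoc, ← exp_add]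
  ring_nf

theorem tendsto_integral_Ioi_standardizedGammaDensity {ι : Type*} {l : Filter ι}
    [l.IsCountablyGenerated] {n : ι → ℕ} {a : ι → ℝ} {α : ℝ} (hn : Tendsto n l atTop)
    (ha : Tendsto a l (𝓝 α)) :
    Tendsto (fun i => ∫ x in Ioi (a i), standardizedGammaDensity (n i) x) l
      (𝓝 (∫ x in Ioi α, stdGaussianPDF x)) := by
  simp only [← integral_indicator measurableSet_Ioi]
  have hsqrt : Tendsto (fun i => √(n i : ℝ)) l atTop :=
    tendsto_sqrt_atTop.comp (tendsto_natCast_atTop_atTop.comp hn)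
  refine tendsto_integral_filter_of_dominated_convergence
    ((Ioi (α - 1)).indicator fun x => 2 * exp ((1 - x) / 4))
    (Eventually.of_forall fun i =>
      ((continuous_standardizedGammaDensity _).aestronglyMeasurable).indicator measurableSet_Ioi)
    ?_ ((integrableOn_Ioi_mul_exp_one_sub_div_four 2 _).integrable_indicator measurableSet_Ioi)
    (by
      filter_upwards [compl_mem_ae_iff.mpr (measure_singleton α)] with x hx
      exact tendsto_indicator_Ioi_apply ha hx ((tendsto_standardizedGammaDensity x).comp hn))
  filter_upwards [hn.eventually_ne_atTop 0, ha.eventually (eventually_gt_nhds (sub_one_lt α)),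
    hsqrt.eventually_ge_atTop (2 * |α - 1|)] with i hni hai hsqrti
  refine Eventually.of_forall fun x => ?_
  by_cases hx : x ∈ Ioi (a i)
  · have hx' : α - 1 < x := hai.trans hx
    rw [indicator_of_mem hx, indicator_of_mem (mem_Ioi.mpr hx')]
    exact norm_standardizedGammaDensity_le hni (by linarith [neg_abs_le (α - 1)])
  · rw [indicator_of_notMem hx, norm_zero]
    exact indicator_nonneg (fun x _ => by positivity) x

theorem stdGaussianCDF_eq_integral_Ioi_neg (β : ℝ) :
    stdGaussianCDF β = ∫ x in Ioi (-β), stdGaussianPDF x := by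
  rw [stdGaussianCDF, ← neg_neg β, ← integral_comp_neg_Ioi, neg_neg]
  simp [stdGaussianPDF]

theorem poisson_cdf_tendsto_gaussianCDF_general (β : ℝ) (s : ℝ → ℕ)
    (hs : ∀ lam : ℝ, 0 < lam → 0 < s lam ∧ lam < s lam)
    (hscale : Tendsto (fun lam : ℝ => Real.sqrt (s lam) * (1 - lam / (s lam : ℝ)))
      atTop (nhds β)) :
    Tendsto (fun lam : ℝ => ∑ k ∈ Finset.range (s lam),
        Real.exp (-lam) * lam ^ k / (k.factorial : ℝ))
      atTop (nhds (stdGaussianCDF β)) := by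
  have hs_top : Tendsto s atTop atTop := by
    refine tendsto_natCast_atTop_iff.mp (tendsto_atTop_mono' _ ?_ tendsto_id)
    filter_upwards [eventually_gt_atTop 0] with lam hlam using (hs lam hlam).2.le
  have hlower : Tendsto (fun lam => (lam - s lam) / √(s lam : ℝ)) atTop (𝓝 (-β)) := by
    refine hscale.neg.congr' ?_
    filter_upwards [eventually_gt_atTop 0] with lam hlam
    have hpos : (0 : ℝ) < s lam := by exact_mod_cast (hs lam hlam).1
    field_simp
    rw [sq_sqrt hpos.le]
    ring
  rw [stdGaussianCDF_eq_integral_Ioi_neg]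
  refine (tendsto_integral_Ioi_standardizedGammaDensity hs_top hlower).congr' ?_
  filter_upwards [eventually_gt_atTop 0] with lam hlam
  exact (sum_range_poisson_eq_integral_standardizedGammaDensity (hs lam hlam).1.ne' lam).symm

theorem poisson_cdf_tendsto_gaussianCDF (β : ℝ) (hβ : 0 < β) (s : ℝ → ℕ)
    (hs : ∀ lam : ℝ, 0 < lam → 0 < s lam ∧ lam < s lam)
    (hscale : Tendsto (fun lam : ℝ => Real.sqrt (s lam) * (1 - lam / (s lam : ℝ)))
      atTop (nhds β)) :
    Tendsto (fun lam : ℝ => ∑ k ∈ Finset.range (s lam),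
        Real.exp (-lam) * lam ^ k / (k.factorial : ℝ))
      atTop (nhds (stdGaussianCDF β)) :=
  poisson_cdf_tendsto_gaussianCDF_general β s hs hscale
end

section
/- Let β > 0 and for each real λ > 0 let s_λ be a positive integer with s_λ > λ such that √(s_λ)·(1 − λ/s_λ) → β as λ → ∞. Then P(Pois(λ) = s_λ)/(1 − λ/s_λ) → φ(β)/β as λ → ∞, where Pois(λ) is a Poisson random variable with mean λ. -/
open Filter

/-!
Put `n = s_λ` and `u = λ / n`. Stirling's formula `n! = σ_n √(2n) (n/e)^n` with `σ_n → √π` turns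
the Poisson weight into `exp (n (1 - u + log u)) / (σ_n √(2n))`. The second-order Taylor expansion
of `log` at `1` gives `n (1 - u + log u) = -n (1 - u)² / 2 + o(n (1 - u)²) → -β² / 2`, and
`√(2n) (1 - u) → √2 β`; dividing, the limit is `e^{-β²/2} / (√(2π) β) = φ(β) / β`.
-/

open Topology Real

theorem abs_one_sub_add_sq_div_two_add_log_le {x : ℝ} (hx : |1 - x| < 1) :
    |(1 - x) + (1 - x) ^ 2 / 2 + log x| ≤ |1 - x| ^ 3 / (1 - |1 - x|) := by
  simpa [Finset.sum_range_succ, one_add_one_eq_two, add_assoc] using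
    abs_log_sub_add_sum_range_le hx 2

theorem tendsto_mul_one_sub_add_log {α : Type*} {l : Filter α} {n u : α → ℝ} {c : ℝ}
    (hu : Tendsto u l (𝓝 1)) (hnu : Tendsto (fun t => n t * (1 - u t) ^ 2) l (𝓝 c)) :
    Tendsto (fun t => n t * (1 - u t + log (u t))) l (𝓝 (-c / 2)) := by
  have hd : Tendsto (fun t => |1 - u t|) l (𝓝 0) := by
    simpa using ((tendsto_const_nhds (x := (1 : ℝ))).sub hu).abs
  have hratio : Tendsto (fun t => |1 - u t| / (1 - |1 - u t|)) l (𝓝 0) := by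
    have h := hd.div ((tendsto_const_nhds (x := (1 : ℝ))).sub hd) (by norm_num)
    rwa [sub_zero, zero_div] at h
  have herr : Tendsto (fun t => n t * ((1 - u t) + (1 - u t) ^ 2 / 2 + log (u t))) l (𝓝 0) := by
    refine squeeze_zero_norm' ?_ (by simpa using hnu.abs.mul hratio)
    filter_upwards [hd.eventually (gt_mem_nhds one_pos)] with t ht
    rw [Real.norm_eq_abs, abs_mul]
    calc |n t| * |1 - u t + (1 - u t) ^ 2 / 2 + log (u t)|
        ≤ |n t| * (|1 - u t| ^ 3 / (1 - |1 - u t|)) :=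
          mul_le_mul_of_nonneg_left (abs_one_sub_add_sq_div_two_add_log_le ht) (abs_nonneg _)
      _ = |n t| * (1 - u t) ^ 2 * (|1 - u t| / (1 - |1 - u t|)) := by
          rw [← sq_abs (1 - u t)]; ring
  convert (hnu.const_mul (-1 / 2)).add herr using 2 <;> ring

theorem tendsto_mul_one_sub_add_log_of_sqrt_mul {α : Type*} {l : Filter α} {n u : α → ℝ} {β : ℝ}
    (hn : Tendsto n l atTop) (hβ : Tendsto (fun t => √(n t) * (1 - u t)) l (𝓝 β)) :
    Tendsto (fun t => n t * (1 - u t + log (u t))) l (𝓝 (-β ^ 2 / 2)) := by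
  have hsqrt : Tendsto (fun t => √(n t)) l atTop := tendsto_sqrt_atTop.comp hn
  have hd : Tendsto (fun t => 1 - u t) l (𝓝 0) := by
    refine (hβ.div_atTop hsqrt).congr' ?_
    filter_upwards [hsqrt.eventually_gt_atTop 0] with t ht
    field_simp
  have hu : Tendsto u l (𝓝 1) := by
    simpa using (tendsto_const_nhds (x := (1 : ℝ))).sub hd
  refine tendsto_mul_one_sub_add_log hu ((hβ.pow 2).congr' ?_)
  filter_upwards [hn.eventually_ge_atTop 0] with t ht
  rw [mul_pow, sq_sqrt ht]

theorem exp_neg_mul_pow_div_factorial_eq_exp_div_stirlingSeq {n : ℕ} (hn : n ≠ 0) {x : ℝ}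
    (hx : 0 < x) :
    exp (-x) * x ^ n / n.factorial =
      exp (n * (1 - x / n + log (x / n))) / (Stirling.stirlingSeq n * √(2 * n)) := by
  have hn' : (0 : ℝ) < n := by positivity
  have hst : 0 < Stirling.stirlingSeq n := by
    obtain ⟨m, rfl⟩ := Nat.exists_eq_succ_of_ne_zero hn
    exact Stirling.stirlingSeq'_pos m
  have hfac : (n.factorial : ℝ) = Stirling.stirlingSeq n * √(2 * n) * n ^ n / exp n := by
    rw [Stirling.stirlingSeq, div_pow, ← exp_nat_mul, mul_one]
    field_simp
  have hexp : exp (n * (1 - x / n + log (x / n))) = exp n * exp (-x) * x ^ n / n ^ n := by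
    have harg : n * (1 - x / n + log (x / n)) = n + -x + log ((x / n) ^ n) := by
      rw [Real.log_pow]; field_simp; ring
    rw [harg, exp_add, exp_add, exp_log (by positivity), div_pow]
    ring
  rw [hexp, hfac]
  field_simp

theorem poisson_pmf_div_tendsto (β : ℝ) (hβ : 0 < β) (s : ℝ → ℕ)
    (hs : ∀ lam : ℝ, 0 < lam → 0 < s lam ∧ lam < s lam)
    (hscale : Tendsto (fun lam : ℝ => Real.sqrt (s lam) * (1 - lam / (s lam : ℝ)))
      atTop (nhds β)) :
    Tendsto (fun lam : ℝ =>
        (Real.exp (-lam) * lam ^ (s lam) / ((s lam).factorial : ℝ)) / (1 - lam / (s lam : ℝ)))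
      atTop (nhds (stdGaussianPDF β / β)) := by
  have hpos : ∀ᶠ lam : ℝ in atTop, 0 < lam := eventually_gt_atTop 0
  have hs_top : Tendsto (fun lam => (s lam : ℝ)) atTop atTop :=
    tendsto_atTop_mono' atTop (hpos.mono fun lam h => (hs lam h).2.le) tendsto_id
  have hexp := (continuous_exp.tendsto _).comp
    (tendsto_mul_one_sub_add_log_of_sqrt_mul hs_top hscale)
  have hstir := Stirling.tendsto_stirlingSeq_sqrt_pi.comp (tendsto_natCast_atTop_iff.mp hs_top)
  have hden : Tendsto (fun lam => √(2 * (s lam : ℝ)) * (1 - lam / s lam)) atTop (𝓝 (√2 * β)) := by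
    refine (hscale.const_mul √2).congr fun lam => ?_
    rw [sqrt_mul zero_le_two, mul_assoc]
  have hlim : exp (-β ^ 2 / 2) / (√π * (√2 * β)) = stdGaussianPDF β / β := by
    rw [stdGaussianPDF, mul_comm 2 π, sqrt_mul pi_pos.le, div_div, mul_assoc]
  rw [← hlim]
  refine (hexp.div (hstir.mul hden) (by positivity)).congr' ?_
  filter_upwards [hpos] with lam h
  simp only [Pi.div_apply, Function.comp_apply]
  rw [exp_neg_mul_pow_div_factorial_eq_exp_div_stirlingSeq (hs lam h).1.ne' h,
    div_div, mul_assoc]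
end

section
/- Let β > 0 and for each real λ > 0 let s_λ be a positive integer with s_λ > λ such that √(s_λ)·(1 − λ/s_λ) → β as λ → ∞. Then √λ · B(s_λ, λ) → φ(β)/Φ(β) as λ → ∞. -/
/-!
Since `1 / B(n, λ) = ∑_{j ≤ n} ∏_{i < j} (n - i) / λ`, the number `1 / (√λ B(n, λ))` is the
integral over `(0, ∞)` of the step function equal to the `j`-th product on
`[j / √λ, (j + 1) / √λ)`. At a fixed `t` that product is `∏ (1 + xᵢ)` with
`∑ xᵢ → β t - t² / 2` and `∑ xᵢ² → 0`, so it tends to `exp (β t - t² / 2)`, while `1 + x ≤ exp x`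
dominates it by `exp ((β + 5 / 2) t - t² / 2)`. Dominated convergence yields the limit
`∫₀^∞ exp (β t - t² / 2) dt`, which the substitution `u = β - t` turns into `Φ(β) / φ(β)`.
-/

open Filter MeasureTheory

/-- The Erlang B formula (blocking probability of the `M/M/s/s` queue). -/
noncomputable def erlangB (s : ℕ) (lam : ℝ) : ℝ :=
  (lam ^ s / s.factorial) / ∑ k ∈ Finset.range (s + 1), lam ^ k / k.factorial

open Finset Real Topology
open scoped Nat

noncomputable def erlangRatio (n : ℕ) (lam : ℝ) (j : ℕ) : ℝ :=
  ∏ i ∈ range j, ((n : ℝ) - i) / lam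

lemma erlangRatio_eq_factorial_div (n : ℕ) (lam : ℝ) {j : ℕ} (hj : j ≤ n) :
    erlangRatio n lam j = n ! / ((n - j)! * lam ^ j) := by
  have hdesc : ∏ i ∈ range j, ((n : ℝ) - i) = n.descFactorial j := by
    rw [Nat.descFactorial_eq_prod_range, Nat.cast_prod]
    exact prod_congr rfl fun i hi => (Nat.cast_sub (by grind)).symm
  rw [erlangRatio, prod_div_distrib, prod_const, card_range, hdesc,
    ← Nat.factorial_mul_descFactorial hj, Nat.cast_mul]
  have : ((n - j)! : ℝ) ≠ 0 := by positivity
  field_simp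

lemma erlangB_eq_inv_sum_erlangRatio (n : ℕ) {lam : ℝ} (hlam : lam ≠ 0) :
    erlangB n lam = (∑ j ∈ range (n + 1), erlangRatio n lam j)⁻¹ := by
  have hsum : ∑ j ∈ range (n + 1), erlangRatio n lam j
      = n ! / lam ^ n * ∑ k ∈ range (n + 1), lam ^ k / k ! := by
    rw [mul_sum, ← sum_range_reflect]
    refine sum_congr rfl fun j hj => ?_
    have hj : j ≤ n := Nat.lt_succ_iff.mp (mem_range.mp hj)
    rw [Nat.add_sub_cancel, erlangRatio_eq_factorial_div n lam (Nat.sub_le n j),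
      Nat.sub_sub_self hj, ← pow_sub_mul_pow lam hj]
    field_simp
  rw [erlangB, hsum]
  field_simp

lemma exp_mul_one_sub_sq_le_one_add {x : ℝ} (hx : |x| ≤ 1) : exp x * (1 - x ^ 2) ≤ 1 + x := by
  have h1 : 0 ≤ 1 + x := by linarith [neg_abs_le x]
  have hinv : exp x * exp (-x) = 1 := by rw [← exp_add, add_neg_cancel, exp_zero]
  nlinarith [mul_le_mul_of_nonneg_left (add_one_le_exp (-x)) h1, exp_pos x]

lemma one_sub_sum_le_prod_one_sub {ι : Type*} (s : Finset ι) {f : ι → ℝ}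
    (h0 : ∀ i ∈ s, 0 ≤ f i) (h1 : ∀ i ∈ s, f i ≤ 1) : 1 - ∑ i ∈ s, f i ≤ ∏ i ∈ s, (1 - f i) := by
  induction s using Finset.cons_induction with
  | empty => simp
  | cons a s _ ih =>
    rw [sum_cons, prod_cons]
    have ih' := ih (fun i hi => h0 i (mem_cons_of_mem hi)) (fun i hi => h1 i (mem_cons_of_mem hi))
    have hsum : 0 ≤ ∑ i ∈ s, f i := sum_nonneg fun i hi => h0 i (mem_cons_of_mem hi)
    nlinarith [h0 a (mem_cons_self a s), h1 a (mem_cons_self a s)]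

lemma prod_one_add_le_exp_sum {ι : Type*} (s : Finset ι) {x : ι → ℝ} (hx : ∀ i ∈ s, -1 ≤ x i) :
    ∏ i ∈ s, (1 + x i) ≤ exp (∑ i ∈ s, x i) := by
  rw [exp_sum]
  exact prod_le_prod (fun i hi => by linarith [hx i hi])
    (fun i _ => by linarith [add_one_le_exp (x i)])

lemma exp_sum_mul_one_sub_sum_sq_le_prod_one_add {ι : Type*} (s : Finset ι) {x : ι → ℝ}
    (hx : ∀ i ∈ s, |x i| ≤ 1) :
    exp (∑ i ∈ s, x i) * (1 - ∑ i ∈ s, x i ^ 2) ≤ ∏ i ∈ s, (1 + x i) := by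
  have hsq : ∀ i ∈ s, x i ^ 2 ≤ 1 := fun i hi => sq_le_one_iff_abs_le_one _ |>.mpr (hx i hi)
  calc exp (∑ i ∈ s, x i) * (1 - ∑ i ∈ s, x i ^ 2)
      ≤ exp (∑ i ∈ s, x i) * ∏ i ∈ s, (1 - x i ^ 2) :=
        mul_le_mul_of_nonneg_left
          (one_sub_sum_le_prod_one_sub s (fun i _ => sq_nonneg _) hsq) (exp_pos _).le
    _ = ∏ i ∈ s, exp (x i) * (1 - x i ^ 2) := by rw [exp_sum, ← prod_mul_distrib]
    _ ≤ ∏ i ∈ s, (1 + x i) :=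
        prod_le_prod (fun i hi => mul_nonneg (exp_pos _).le (by linarith [hsq i hi]))
          (fun i hi => exp_mul_one_sub_sq_le_one_add (hx i hi))

lemma tendsto_prod_one_add {ι κ : Type*} {l : Filter ι} {s : ι → Finset κ} {x : ι → κ → ℝ}
    {L : ℝ} (hx : ∀ᶠ k in l, ∀ i ∈ s k, |x k i| ≤ 1)
    (hsum : Tendsto (fun k => ∑ i ∈ s k, x k i) l (𝓝 L))
    (hsq : Tendsto (fun k => ∑ i ∈ s k, x k i ^ 2) l (𝓝 0)) :
    Tendsto (fun k => ∏ i ∈ s k, (1 + x k i)) l (𝓝 (exp L)) := by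
  have hexp := (continuous_exp.tendsto L).comp hsum
  have hlow : Tendsto (fun k => exp (∑ i ∈ s k, x k i) * (1 - ∑ i ∈ s k, x k i ^ 2)) l
      (𝓝 (exp L)) := by
    simpa using hexp.mul (tendsto_const_nhds (x := (1 : ℝ)).sub hsq)
  exact tendsto_of_tendsto_of_tendsto_of_le_of_le' hlow hexp
    (hx.mono fun k hk => exp_sum_mul_one_sub_sum_sq_le_prod_one_add _ hk)
    (hx.mono fun k hk => prod_one_add_le_exp_sum _ fun i hi => (abs_le.mp (hk i hi)).1)

lemma integrable_exp_mul_sub_sq_div_two (c : ℝ) :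
    Integrable fun t : ℝ => exp (c * t - t ^ 2 / 2) := by
  have h := ((integrable_exp_neg_mul_sq (by norm_num : (0 : ℝ) < 1 / 2)).comp_sub_right c).const_mul
    (exp (c ^ 2 / 2))
  refine h.congr (Eventually.of_forall fun t => ?_)
  simp only [← exp_add]
  ring_nf

lemma integral_Ioi_exp_mul_sub_sq_div_two (b : ℝ) :
    ∫ t in Set.Ioi 0, exp (b * t - t ^ 2 / 2) = stdGaussianCDF b / stdGaussianPDF b := by
  have hpre : (fun t : ℝ => b - t) ⁻¹' Set.Iic b = Set.Ici 0 := by ext; simp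
  have hshift := (volume.measurePreserving_sub_left b).setIntegral_preimage_emb
    (measurableEmbedding_subLeft b) (fun u => exp (-u ^ 2 / 2)) (Set.Iic b)
  rw [hpre, integral_Ici_eq_integral_Ioi] at hshift
  have hexp : ∀ t : ℝ, exp (b * t - t ^ 2 / 2) = exp (b ^ 2 / 2) * exp (-(b - t) ^ 2 / 2) := by
    intro t; rw [← exp_add]; ring_nf
  simp only [stdGaussianCDF, stdGaussianPDF, hexp, integral_const_mul, hshift, integral_div]
  rw [div_div_div_cancel_right₀ (by positivity), eq_div_iff (exp_pos _).ne', mul_comm,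
    ← mul_assoc, ← exp_add]
  ring_nf
  simp

lemma stdGaussianCDF_div_stdGaussianPDF_pos (b : ℝ) : 0 < stdGaussianCDF b / stdGaussianPDF b := by
  rw [← integral_Ioi_exp_mul_sub_sq_div_two]
  have : NeZero (volume (Set.Ioi (0 : ℝ))) := ⟨by simp⟩
  exact integral_exp_pos (integrable_exp_mul_sub_sq_div_two b).integrableOn

noncomputable def stepFun (ρ : ℝ) (a : ℕ → ℝ) (m : ℕ) (t : ℝ) : ℝ :=
  ∑ j ∈ range m, (Set.Ico (j / ρ) ((j + 1) / ρ)).indicator (fun _ => a j) t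

section StepFun

variable {ρ : ℝ} (a : ℕ → ℝ) (m : ℕ)

lemma measurable_stepFun : Measurable (stepFun ρ a m) :=
  Finset.measurable_sum _ fun _ _ => measurable_const.indicator measurableSet_Ico

lemma stepFun_eq_ite (hρ : 0 < ρ) {t : ℝ} (ht : 0 ≤ t) :
    stepFun ρ a m t = if ⌊t * ρ⌋₊ < m then a ⌊t * ρ⌋₊ else 0 := by
  have hmem : ∀ j : ℕ, t ∈ Set.Ico (j / ρ) ((j + 1) / ρ) ↔ ⌊t * ρ⌋₊ = j := fun j => by
    rw [Set.mem_Ico, div_le_iff₀ hρ, lt_div_iff₀ hρ, Nat.floor_eq_iff (by positivity)]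
  simp only [stepFun, Set.indicator_apply, hmem, sum_ite_eq, mem_range]

lemma integral_stepFun (hρ : 0 < ρ) :
    ∫ t in Set.Ioi 0, stepFun ρ a m t = (∑ j ∈ range m, a j) / ρ := by
  simp only [← integral_Ici_eq_integral_Ioi, stepFun]
  rw [integral_finsetSum _ fun j _ => ?_, sum_div]
  · refine sum_congr rfl fun j _ => ?_
    have hsub : Set.Ico ((j : ℝ) / ρ) ((j + 1) / ρ) ⊆ Set.Ici 0 := fun t ht =>
      le_trans (by positivity) ht.1
    rw [setIntegral_indicator measurableSet_Ico, Set.inter_eq_self_of_subset_right hsub,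
      setIntegral_const, measureReal_def, Real.volume_Ico, ENNReal.toReal_ofReal, smul_eq_mul]
    · field_simp; ring
    · rw [sub_nonneg]; gcongr; linarith
  · exact (integrable_indicator_iff measurableSet_Ico).mpr
      (integrableOn_const ((Measure.restrict_apply_le _ _).trans_lt measure_Ico_lt_top).ne)

lemma stepFun_nonneg {a : ℕ → ℝ} {m : ℕ} (ha : ∀ j < m, 0 ≤ a j) (t : ℝ) :
    0 ≤ stepFun ρ a m t :=
  sum_nonneg fun j hj => Set.indicator_nonneg (fun _ _ => ha j (mem_range.mp hj)) _

end StepFun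

lemma inv_eq_inv_sqrt_sq {x : ℝ} (hx : 0 ≤ x) : x⁻¹ = (√x)⁻¹ ^ 2 := by
  rw [inv_pow, sq_sqrt hx]

lemma sum_range_sub_div (d lam : ℝ) (j : ℕ) :
    ∑ i ∈ range j, (d - i) / lam = (j * d - j * (j - 1) / 2) / lam := by
  induction j with
  | zero => simp
  | succ j ih => rw [sum_range_succ, ih]; push_cast; ring

lemma erlangRatio_eq_prod_one_add (n : ℕ) {lam : ℝ} (hlam : lam ≠ 0) (j : ℕ) :
    erlangRatio n lam j = ∏ i ∈ range j, (1 + ((n : ℝ) - lam - i) / lam) :=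
  prod_congr rfl fun i _ => by field_simp; ring

lemma erlangRatio_nonneg {n j : ℕ} {lam : ℝ} (hlam : 0 < lam) (hj : j ≤ n) :
    0 ≤ erlangRatio n lam j :=
  prod_nonneg fun i hi => div_nonneg
    (sub_nonneg.mpr (by exact_mod_cast ((mem_range.mp hi).trans_le hj).le)) hlam.le

lemma erlangRatio_le_exp {n j : ℕ} {lam : ℝ} (hlam : 0 < lam) (hj : j ≤ n) :
    erlangRatio n lam j ≤ exp ((j * ((n : ℝ) - lam) - j * (j - 1) / 2) / lam) := by
  rw [erlangRatio_eq_prod_one_add n hlam.ne', ← sum_range_sub_div]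
  refine prod_one_add_le_exp_sum _ fun i hi => ?_
  have : (i : ℝ) ≤ n := by exact_mod_cast ((mem_range.mp hi).trans_le hj).le
  rw [le_div_iff₀ hlam]
  linarith

lemma stepFun_erlangRatio_le {n : ℕ} {lam c t : ℝ} (hlam : 1 ≤ lam) (hn : lam < n)
    (hc : (n : ℝ) - lam ≤ c * √lam) (ht : 0 ≤ t) :
    stepFun √lam (erlangRatio n lam) (n + 1) t ≤ exp ((c + 3 / 2) * t - t ^ 2 / 2) := by
  have hlam0 : 0 < lam := by linarith
  rw [stepFun_eq_ite _ _ (sqrt_pos.2 hlam0) ht]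
  split_ifs with hj
  · refine (erlangRatio_le_exp hlam0 (Nat.lt_succ_iff.mp hj)).trans (exp_le_exp.mpr ?_)
    set u := t * √lam with hu_def
    have hu : 0 ≤ u := by positivity
    have hju : (⌊u⌋₊ : ℝ) ≤ u := Nat.floor_le hu
    have huj : u < ⌊u⌋₊ + 1 := Nat.lt_floor_add_one u
    have hjj : u ^ 2 - 3 * u ≤ ⌊u⌋₊ * ((⌊u⌋₊ : ℝ) - 1) := by
      nlinarith [(Nat.cast_nonneg ⌊u⌋₊ : (0 : ℝ) ≤ ⌊u⌋₊)]
    have hu2 : u ^ 2 = t ^ 2 * lam := by rw [hu_def, mul_pow, sq_sqrt hlam0.le]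
    have hul : u ≤ t * lam := mul_le_mul_of_nonneg_left (sqrt_le_left (by linarith) |>.mpr
      (by nlinarith)) ht
    have hcj : ⌊u⌋₊ * ((n : ℝ) - lam) ≤ c * t * lam := by
      calc ⌊u⌋₊ * ((n : ℝ) - lam) ≤ u * (c * √lam) := mul_le_mul hju hc (by linarith) hu
        _ = c * t * lam := by rw [hu_def, mul_mul_mul_comm, mul_self_sqrt hlam0.le]; ring
    rw [div_le_iff₀ hlam0]
    nlinarith
  · positivity

lemma tendsto_erlangRatio {n j : ℝ → ℕ} {β t : ℝ}
    (hc : Tendsto (fun lam => ((n lam : ℝ) - lam) / √lam) atTop (𝓝 β))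
    (hj : Tendsto (fun lam => (j lam : ℝ) / √lam) atTop (𝓝 t)) :
    Tendsto (fun lam => erlangRatio (n lam) lam (j lam)) atTop (𝓝 (exp (β * t - t ^ 2 / 2))) := by
  have hr : Tendsto (fun lam : ℝ => (√lam)⁻¹) atTop (𝓝 0) := tendsto_sqrt_atTop.inv_tendsto_atTop
  set ε := fun lam => (|(n lam : ℝ) - lam| / √lam + j lam / √lam) * (√lam)⁻¹
  have hε : Tendsto ε atTop (𝓝 0) := by
    have := (hc.abs.add hj).mul hr
    simp only [mul_zero] at this
    refine this.congr' ?_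
    filter_upwards [eventually_gt_atTop 0] with lam hlam
    rw [abs_div, abs_of_pos (sqrt_pos.2 hlam)]
  have hxε : ∀ᶠ lam in atTop, ∀ i ∈ range (j lam), |((n lam : ℝ) - lam - i) / lam| ≤ ε lam := by
    filter_upwards [eventually_gt_atTop 0] with lam hlam i hi
    have hij : (i : ℝ) ≤ j lam := by exact_mod_cast (mem_range.mp hi).le
    have hε_eq : ε lam = (|(n lam : ℝ) - lam| + j lam) / lam := by
      simp only [ε, div_eq_mul_inv, inv_eq_inv_sqrt_sq hlam.le]
      ring
    rw [hε_eq, abs_div, abs_of_pos hlam]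
    gcongr
    exact (abs_sub _ _).trans (by rw [Nat.abs_cast]; gcongr)
  have hsum : Tendsto (fun lam => ∑ i ∈ range (j lam), ((n lam : ℝ) - lam - i) / lam) atTop
      (𝓝 (β * t - t ^ 2 / 2)) := by
    have := (hj.mul hc).sub ((hj.mul (hj.sub hr)).div_const 2)
    rw [show t * β - t * (t - 0) / 2 = β * t - t ^ 2 / 2 by ring] at this
    refine this.congr' ?_
    filter_upwards [eventually_gt_atTop 0] with lam hlam
    rw [sum_range_sub_div]
    simp only [div_eq_mul_inv, inv_eq_inv_sqrt_sq hlam.le]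
    ring
  have hsq : Tendsto (fun lam => ∑ i ∈ range (j lam), (((n lam : ℝ) - lam - i) / lam) ^ 2) atTop
      (𝓝 0) := by
    have hbound : Tendsto (fun lam => (j lam : ℝ) * ε lam ^ 2) atTop (𝓝 0) := by
      have := (hj.mul ((hc.abs.add hj).pow 2)).mul hr
      simp only [mul_zero] at this
      refine this.congr' ?_
      filter_upwards [eventually_gt_atTop 0] with lam hlam
      rw [abs_div, abs_of_pos (sqrt_pos.2 hlam)]
      ring
    refine squeeze_zero' (Eventually.of_forall fun _ => sum_nonneg fun _ _ => sq_nonneg _)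
      ?_ hbound
    filter_upwards [hxε] with lam hlam
    calc _ ≤ ∑ i ∈ range (j lam), ε lam ^ 2 :=
          sum_le_sum fun i hi => sq_le_sq' (abs_le.mp (hlam i hi)).1 (abs_le.mp (hlam i hi)).2
      _ = j lam * ε lam ^ 2 := by rw [sum_const, card_range, nsmul_eq_mul]
  have hx1 : ∀ᶠ lam in atTop, ∀ i ∈ range (j lam), |((n lam : ℝ) - lam - i) / lam| ≤ 1 := by
    filter_upwards [hxε, hε.eventually (ge_mem_nhds one_pos)] with lam hlam hε1 i hi
    exact (hlam i hi).trans hε1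
  refine (tendsto_prod_one_add hx1 hsum hsq).congr' ?_
  filter_upwards [eventually_gt_atTop 0] with lam hlam
  exact (erlangRatio_eq_prod_one_add _ hlam.ne' _).symm

section Scaling

variable {n : ℝ → ℕ} {β : ℝ} (hn : ∀ᶠ lam in atTop, lam < n lam)
  (hc : Tendsto (fun lam => ((n lam : ℝ) - lam) / √lam) atTop (𝓝 β))
include hn hc

lemma tendsto_stepFun_erlangRatio {t : ℝ} (ht : 0 ≤ t) :
    Tendsto (fun lam => stepFun √lam (erlangRatio (n lam) lam) (n lam + 1) t) atTop
      (𝓝 (exp (β * t - t ^ 2 / 2))) := by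
  have hj := (tendsto_nat_floor_mul_div_atTop ht).comp tendsto_sqrt_atTop
  refine (tendsto_erlangRatio (j := fun lam => ⌊t * √lam⌋₊) hc hj).congr' ?_
  filter_upwards [eventually_gt_atTop 0, hn, eventually_ge_atTop (t ^ 2)] with lam hlam hlt ht2
  have hts : t ≤ √lam := le_sqrt_of_sq_le ht2
  have hle : t * √lam ≤ lam := by nlinarith [mul_self_sqrt hlam.le, sqrt_nonneg lam]
  rw [stepFun_eq_ite _ _ (sqrt_pos.2 hlam) ht, if_pos]
  exact (Nat.floor_lt (by positivity)).mpr (by push_cast; linarith)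

lemma tendsto_sum_erlangRatio_div_sqrt :
    Tendsto (fun lam => (∑ j ∈ range (n lam + 1), erlangRatio (n lam) lam j) / √lam) atTop
      (𝓝 (∫ t in Set.Ioi 0, exp (β * t - t ^ 2 / 2))) := by
  have hdom : ∀ᶠ lam in atTop, (n lam : ℝ) - lam ≤ (β + 1) * √lam := by
    filter_upwards [eventually_gt_atTop 0, hc.eventually_le_const (lt_add_one β)] with lam hlam h
    exact (div_le_iff₀ (sqrt_pos.2 hlam)).mp h
  have hdct := tendsto_integral_filter_of_dominated_convergence (μ := volume.restrict (Set.Ioi 0))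
    (F := fun lam => stepFun √lam (erlangRatio (n lam) lam) (n lam + 1))
    (fun t => exp ((β + 1 + 3 / 2) * t - t ^ 2 / 2))
    (Eventually.of_forall fun _ => (measurable_stepFun _ _).aestronglyMeasurable) ?_
    (integrable_exp_mul_sub_sq_div_two _).integrableOn
    ((ae_restrict_iff' measurableSet_Ioi).mpr (Eventually.of_forall fun t ht =>
      tendsto_stepFun_erlangRatio hn hc (le_of_lt ht)))
  · refine hdct.congr' ?_
    filter_upwards [eventually_gt_atTop 0] with lam hlam
    exact integral_stepFun _ _ (sqrt_pos.2 hlam)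
  · filter_upwards [eventually_ge_atTop 1, hn, hdom] with lam h1 hlt hb
    refine (ae_restrict_iff' measurableSet_Ioi).mpr (Eventually.of_forall fun t ht => ?_)
    rw [Real.norm_of_nonneg (stepFun_nonneg (fun j hj => erlangRatio_nonneg (by linarith)
      (Nat.lt_succ_iff.mp hj)) t)]
    exact stepFun_erlangRatio_le h1 hlt hb (le_of_lt ht)

end Scaling

lemma tendsto_sub_div_sqrt_of_tendsto_sqrt_mul_one_sub {f : ℝ → ℝ} {β : ℝ}
    (hf : ∀ᶠ lam in atTop, lam < f lam)
    (h : Tendsto (fun lam => √(f lam) * (1 - lam / f lam)) atTop (𝓝 β)) :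
    Tendsto (fun lam => (f lam - lam) / √lam) atTop (𝓝 β) := by
  have hpos : ∀ᶠ lam in atTop, 0 < lam ∧ lam < f lam :=
    (eventually_gt_atTop 0).and hf
  have hftop : Tendsto f atTop atTop := tendsto_atTop_mono' _ (hf.mono fun _ h => h.le) tendsto_id
  have hd : Tendsto (fun lam => (f lam - lam) / √(f lam)) atTop (𝓝 β) := by
    refine h.congr' ?_
    filter_upwards [hpos] with lam ⟨hlam, hlt⟩
    have hf0 : 0 < f lam := hlam.trans hlt
    rw [eq_div_iff (sqrt_pos.2 hf0).ne', mul_right_comm, mul_self_sqrt hf0.le]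
    field_simp
  have hlf : Tendsto (fun lam => lam / f lam) atTop (𝓝 1) := by
    have := (hd.mul (tendsto_sqrt_atTop.comp hftop).inv_tendsto_atTop).const_sub 1
    rw [mul_zero, sub_zero] at this
    refine this.congr' ?_
    filter_upwards [hpos] with lam ⟨hlam, hlt⟩
    have hf0 : 0 < f lam := hlam.trans hlt
    simp only [Function.comp_apply, Pi.inv_apply]
    rw [← div_eq_mul_inv, div_div, mul_self_sqrt hf0.le]
    field_simp
    ring
  have hratio : Tendsto (fun lam => √(f lam / lam)) atTop (𝓝 1) := by
    have := (continuous_sqrt.tendsto _).comp (hlf.inv₀ one_ne_zero)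
    simpa only [inv_one, sqrt_one, Function.comp_def, inv_div] using this
  have := hd.mul hratio
  rw [mul_one] at this
  refine this.congr' ?_
  filter_upwards [hpos] with lam ⟨hlam, hlt⟩
  rw [sqrt_div' _ hlam.le, div_mul_div_cancel₀ (sqrt_pos.2 (hlam.trans hlt)).ne']

theorem erlangB_tendsto_qed_general (β : ℝ) (s : ℝ → ℕ)
    (hs : ∀ lam : ℝ, 0 < lam → 0 < s lam ∧ lam < s lam)
    (hscale : Tendsto (fun lam : ℝ => Real.sqrt (s lam) * (1 - lam / (s lam : ℝ)))
      atTop (nhds β)) :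
    Tendsto (fun lam : ℝ => Real.sqrt lam * erlangB (s lam) lam) atTop
      (nhds (stdGaussianPDF β / stdGaussianCDF β)) := by
  have hlt : ∀ᶠ lam in atTop, lam < s lam :=
    (eventually_gt_atTop 0).mono fun lam hlam => (hs lam hlam).2
  have hsum := tendsto_sum_erlangRatio_div_sqrt hlt
    (tendsto_sub_div_sqrt_of_tendsto_sqrt_mul_one_sub hlt hscale)
  rw [integral_Ioi_exp_mul_sub_sq_div_two] at hsum
  have hinv := hsum.inv₀ (stdGaussianCDF_div_stdGaussianPDF_pos β).ne'
  rw [inv_div] at hinv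
  refine hinv.congr' ?_
  filter_upwards [eventually_gt_atTop 0] with lam hlam
  rw [erlangB_eq_inv_sum_erlangRatio _ hlam.ne', inv_div, div_eq_mul_inv]

theorem erlangB_tendsto_qed (β : ℝ) (hβ : 0 < β) (s : ℝ → ℕ)
    (hs : ∀ lam : ℝ, 0 < lam → 0 < s lam ∧ lam < s lam)
    (hscale : Tendsto (fun lam : ℝ => Real.sqrt (s lam) * (1 - lam / (s lam : ℝ)))
      atTop (nhds β)) :
    Tendsto (fun lam : ℝ => Real.sqrt lam * erlangB (s lam) lam) atTop
      (nhds (stdGaussianPDF β / stdGaussianCDF β)) :=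
  erlangB_tendsto_qed_general β s hs hscale
end

section
/- (Jagers–van Doorn integral representation) For every positive integer s and every real λ with 0 < λ < s, the reciprocal of the Erlang C formula admits the representation C(s,λ)^{−1} = λ · ∫_0^∞ t · e^{−λt} · (1+t)^{s−1} dt. -/
/-!
Writing `t (1 + t) ^ (s - 1) = (1 + t) ^ s - (1 + t) ^ (s - 1)` reduces the integral to the
Laplace transforms of `(1 + t) ^ m`, which by the binomial theorem and the Gamma integral are
`m! / λ ^ (m + 1) * e_m(λ)` with `e_m(λ) = ∑_{k ≤ m} λ ^ k / k!` the truncated exponential.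
Since `s! e_s(λ) = s! e_{s-1}(λ) + λ ^ s`, the difference of the two transforms is exactly the
reciprocal of the Erlang C formula.
-/

open MeasureTheory

/-- The Erlang C formula (delay probability of the `M/M/s` queue). -/
noncomputable def erlangC (s : ℕ) (lam : ℝ) : ℝ :=
  (lam ^ s / s.factorial) *
    ((1 - lam / s) * ∑ k ∈ Finset.range s, lam ^ k / k.factorial + lam ^ s / s.factorial)⁻¹

open Finset Set Real

section LaplaceTransform

variable {b : ℝ}

lemma integrableOn_pow_mul_exp_neg_mul (n : ℕ) (hb : 0 < b) :
    IntegrableOn (fun t : ℝ => t ^ n * exp (-b * t)) (Ioi 0) := by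
  simpa [rpow_natCast] using integrableOn_rpow_mul_exp_neg_mul_rpow (s := n) (p := 1)
    (neg_one_lt_zero.trans_le n.cast_nonneg) one_pos hb

lemma integral_pow_mul_exp_neg_mul (n : ℕ) (hb : 0 < b) :
    ∫ t in Ioi (0 : ℝ), t ^ n * exp (-b * t) = n.factorial / b ^ (n + 1) := by
  have h := integral_rpow_mul_exp_neg_mul_Ioi (a := n + 1) (by positivity) hb
  rw [add_sub_cancel_right, Gamma_nat_eq_factorial, ← Nat.cast_add_one, rpow_natCast] at h
  simp_rw [rpow_natCast, ← neg_mul] at h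
  rw [h, one_div, inv_pow, inv_mul_eq_div]

lemma one_add_pow_mul_exp_neg_mul_eq_sum (m : ℕ) (t : ℝ) :
    (1 + t) ^ m * exp (-b * t)
      = ∑ k ∈ range (m + 1), (m.choose k : ℝ) * (t ^ (m - k) * exp (-b * t)) := by
  rw [add_pow, sum_mul]
  refine sum_congr rfl fun k _ => ?_
  ring

lemma integrableOn_one_add_pow_mul_exp_neg_mul (m : ℕ) (hb : 0 < b) :
    IntegrableOn (fun t : ℝ => (1 + t) ^ m * exp (-b * t)) (Ioi 0) := by
  simp_rw [one_add_pow_mul_exp_neg_mul_eq_sum]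
  exact integrable_finsetSum _ fun k _ =>
    (integrableOn_pow_mul_exp_neg_mul (m - k) hb).const_mul _

lemma integral_one_add_pow_mul_exp_neg_mul (m : ℕ) (hb : 0 < b) :
    ∫ t in Ioi (0 : ℝ), (1 + t) ^ m * exp (-b * t)
      = m.factorial / b ^ (m + 1) * ∑ k ∈ range (m + 1), b ^ k / k.factorial := by
  simp_rw [one_add_pow_mul_exp_neg_mul_eq_sum]
  rw [integral_finsetSum _ fun k _ =>
    (integrableOn_pow_mul_exp_neg_mul (m - k) hb).const_mul _, mul_sum]
  refine sum_congr rfl fun k hk => ?_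
  have hkm : k ≤ m := Nat.lt_succ_iff.mp (mem_range.mp hk)
  rw [integral_const_mul, integral_pow_mul_exp_neg_mul _ hb, Nat.cast_choose ℝ hkm,
    show m + 1 = (m - k + 1) + k by omega, pow_add]
  field_simp
  ring

end LaplaceTransform

theorem erlangC_inv_integral_repr_general (s : ℕ) (hs : 0 < s) (lam : ℝ)
    (h0 : 0 < lam) :
    (erlangC s lam)⁻¹ =
      lam * ∫ t in Set.Ioi (0 : ℝ), t * Real.exp (-lam * t) * (1 + t) ^ (s - 1) := by
  obtain ⟨n, rfl⟩ := Nat.exists_eq_add_one_of_ne_zero hs.ne'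
  have hsplit : ∀ t : ℝ, t * exp (-lam * t) * (1 + t) ^ (n + 1 - 1)
      = (1 + t) ^ (n + 1) * exp (-lam * t) - (1 + t) ^ n * exp (-lam * t) := fun t => by
    rw [Nat.add_sub_cancel]; ring
  simp_rw [hsplit]
  rw [integral_sub (integrableOn_one_add_pow_mul_exp_neg_mul _ h0)
      (integrableOn_one_add_pow_mul_exp_neg_mul _ h0),
    integral_one_add_pow_mul_exp_neg_mul _ h0, integral_one_add_pow_mul_exp_neg_mul _ h0,
    erlangC, mul_inv, inv_inv, sum_range_succ _ (n + 1), Nat.factorial_succ]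
  push_cast
  field_simp
  ring

/-- Jagers–van Doorn integral representation of the reciprocal of the Erlang C formula. -/
theorem erlangC_inv_integral_repr (s : ℕ) (hs : 0 < s) (lam : ℝ)
    (h0 : 0 < lam) (hlt : lam < s) :
    (erlangC s lam)⁻¹ =
      lam * ∫ t in Set.Ioi (0 : ℝ), t * Real.exp (-lam * t) * (1 + t) ^ (s - 1) :=
  erlangC_inv_integral_repr_general s hs lam h0
end

section
/- (Upper bound on the Erlang C formula) For all reals s, λ with s > λ > 0, writing ρ = λ/s, α = √(−2s(1 − ρ + ln ρ)) and γ = (1−ρ)√s, the extended Erlang C formula satisfies C(s,λ) ≤ [ ρ + γ·( Φ(α)/φ(α) + (2/3)·1/√s ) ]^{−1}. -/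
open MeasureTheory

/-- The Erlang C formula, extended to non-integer `s` via the Jagers–van Doorn
integral representation `C(s,λ)⁻¹ = λ ∫_0^∞ t e^{−λt} (1+t)^{s−1} dt`. -/
noncomputable def erlangCExt (s lam : ℝ) : ℝ :=
  (lam * ∫ t in Set.Ioi (0 : ℝ), t * Real.exp (-lam * t) * (1 + t) ^ (s - 1))⁻¹

/-!
By parts, `C(s,λ)⁻¹ = 1 + (s - λ) A` with `A = ∫₀^∞ e^{-λt} (1+t)^{s-1} dt`, and the substitution
`v = ρ (1 + t)` makes `A` an incomplete gamma integral `∫_ρ^∞ v^{s-1} e^{-sv} dv` up to an explicit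
factor. Temme's substitution `y = √s η(v)`, with `η² / 2 = v - 1 - log v`, maps `(ρ, ∞)` onto
`(-α, ∞)` and turns `v^s e^{-sv}` into a multiple of `e^{-y²/2}`. After weighting the Gaussian by
`1 - y / (3√s)` the Jacobian is dominated by `√s / v`, because `(1 - η/3) dη/dv ≤ 1/v`; this is the
elementary inequality `9 (v - 1)² ≤ 2 (v - 1 - log v) (v + 2)²`. Integrating the weighted Gaussian
over `(-α, ∞)` yields `Φ(α)/φ(α) - 1/(3√s) ≤ √s A`, which rearranges into the bound.
-/

open Real Set Filter Topology

lemma le_of_hasDerivAt_of_deriv_mul_sub_nonneg {f f' : ℝ → ℝ} {a b : ℝ}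
    (hf : ∀ x ∈ uIcc a b, HasDerivAt f (f' x) x) (hf' : ∀ x ∈ uIcc a b, 0 ≤ f' x * (x - a)) :
    f a ≤ f b := by
  have hcont : ContinuousOn f (uIcc a b) := fun x hx => (hf x hx).continuousAt.continuousWithinAt
  rcases lt_trichotomy a b with hab | rfl | hab
  · obtain ⟨c, hc, hslope⟩ := exists_hasDerivAt_eq_slope f f' hab
      (by rwa [uIcc_of_le hab.le] at hcont)
      fun x hx => hf x (Ioo_subset_Icc_self.trans Icc_subset_uIcc hx)
    have hc' : 0 ≤ f' c :=
      nonneg_of_mul_nonneg_left (hf' c (Icc_subset_uIcc (Ioo_subset_Icc_self hc)))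
        (by linarith [hc.1])
    rw [hslope, div_nonneg_iff] at hc'
    rcases hc' with h | h <;> linarith [h.1, h.2]
  · rfl
  · obtain ⟨c, hc, hslope⟩ := exists_hasDerivAt_eq_slope f f' hab
      (by rwa [uIcc_of_ge hab.le] at hcont)
      fun x hx => hf x (Ioo_subset_Icc_self.trans Icc_subset_uIcc' hx)
    have hc' : f' c ≤ 0 :=
      nonpos_of_mul_nonneg_left (hf' c (Icc_subset_uIcc' (Ioo_subset_Icc_self hc)))
        (by linarith [hc.2])
    rw [hslope, div_nonpos_iff] at hc'
    rcases hc' with h | h <;> linarith [h.1, h.2]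

lemma StrictMonoOn.image_Ioi_eq_Ioi {α β : Type*} [ConditionallyCompleteLinearOrder α]
    [TopologicalSpace α] [OrderTopology α] [DenselyOrdered α] [LinearOrder β]
    [TopologicalSpace β] [OrderClosedTopology β] [NoMaxOrder β] {f : α → β} {a : α}
    (hm : StrictMonoOn f (Ici a)) (hc : ContinuousOn f (Ici a)) (ht : Tendsto f atTop atTop) :
    f '' Ioi a = Ioi (f a) := by
  refine Subset.antisymm ?_ fun y (hy : f a < y) => ?_
  · rintro _ ⟨x, hx, rfl⟩
    exact hm self_mem_Ici (mem_Ici.2 (le_of_lt hx)) hx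
  obtain ⟨b, hyb, hab⟩ := ((ht.eventually_gt_atTop y).and (eventually_ge_atTop a)).exists
  obtain ⟨x, hx, rfl⟩ := intermediate_value_Ioo hab (hc.mono Icc_subset_Ici_self) ⟨hy, hyb⟩
  exact ⟨x, hx.1, rfl⟩

lemma integrableOn_rpow_mul_exp_neg_mul {c b : ℝ} (hc : -1 < c) (hb : 0 < b) :
    IntegrableOn (fun x : ℝ => x ^ c * exp (-b * x)) (Ioi 0) := by
  simpa using integrableOn_rpow_mul_exp_neg_mul_rpow hc one_pos hb

/-- Temme's variable of the incomplete gamma function (DLMF 8.12.1): `η² / 2 = v - 1 - log v`,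
with `η` of the sign of `v - 1`. -/
noncomputable def temmeEta (v : ℝ) : ℝ := Real.sign (v - 1) * √(2 * (v - 1 - log v))

section TemmeEta

variable {v : ℝ}

lemma temmeEta_of_one_lt (hv : 1 < v) : temmeEta v = √(2 * (v - 1 - log v)) := by
  rw [temmeEta, Real.sign_of_pos (sub_pos.2 hv), one_mul]

lemma temmeEta_of_lt_one (hv : v < 1) : temmeEta v = -√(2 * (v - 1 - log v)) := by
  rw [temmeEta, Real.sign_of_neg (sub_neg.2 hv), neg_one_mul]

@[simp]
lemma temmeEta_one : temmeEta 1 = 0 := by simp [temmeEta]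

lemma temmeEta_sq (hv : 0 < v) : temmeEta v ^ 2 = 2 * (v - 1 - log v) := by
  have hψ : 0 ≤ 2 * (v - 1 - log v) := by linarith [log_le_sub_one_of_pos hv]
  rcases lt_trichotomy v 1 with h | rfl | h
  · rw [temmeEta_of_lt_one h, neg_sq, sq_sqrt hψ]
  · simp
  · rw [temmeEta_of_one_lt h, sq_sqrt hψ]

lemma abs_temmeEta_le : |temmeEta v| ≤ √(2 * (v - 1 - log v)) := by
  rcases Real.sign_apply_eq (v - 1) with h | h | h <;>
    simp [temmeEta, h, abs_of_nonneg (sqrt_nonneg _)]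

lemma sub_one_div_temmeEta_pos (hv : 0 < v) (h1 : v ≠ 1) : 0 < (v - 1) / temmeEta v := by
  have hψ : 0 < 2 * (v - 1 - log v) := by linarith [log_lt_sub_one_of_pos hv h1]
  rcases h1.lt_or_gt with h | h
  · rw [temmeEta_of_lt_one h]
    exact div_pos_of_neg_of_neg (by linarith) (neg_neg_of_pos (sqrt_pos.2 hψ))
  · rw [temmeEta_of_one_lt h]
    exact div_pos (by linarith) (sqrt_pos.2 hψ)

lemma hasDerivAt_temmeEta (hv : 0 < v) (h1 : v ≠ 1) :
    HasDerivAt temmeEta ((v - 1) / (v * temmeEta v)) v := by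
  have hψ : 0 < 2 * (v - 1 - log v) := by linarith [log_lt_sub_one_of_pos hv h1]
  have hin : HasDerivAt (fun w => 2 * (w - 1 - log w)) (2 * (1 - v⁻¹)) v :=
    (((hasDerivAt_id' v).sub_const 1).sub (hasDerivAt_log hv.ne')).const_mul 2
  have hroot : HasDerivAt (fun w => √(2 * (w - 1 - log w)))
      ((v - 1) / (v * √(2 * (v - 1 - log v)))) v :=
    (hin.sqrt hψ.ne').congr_deriv (by field_simp)
  rcases h1.lt_or_gt with h | h
  · have heq : temmeEta =ᶠ[𝓝 v] fun w => -√(2 * (w - 1 - log w)) := by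
      filter_upwards [Iio_mem_nhds h] with w hw using temmeEta_of_lt_one hw
    rw [temmeEta_of_lt_one h]
    exact (hroot.neg.congr_of_eventuallyEq heq).congr_deriv (by rw [mul_neg, div_neg])
  · have heq : temmeEta =ᶠ[𝓝 v] fun w => √(2 * (w - 1 - log w)) := by
      filter_upwards [Ioi_mem_nhds h] with w hw using temmeEta_of_one_lt hw
    rw [temmeEta_of_one_lt h]
    exact hroot.congr_of_eventuallyEq heq

lemma continuousOn_temmeEta : ContinuousOn temmeEta (Ioi 0) := by
  intro v hv
  rcases eq_or_ne v 1 with rfl | h1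
  · have hroot : Tendsto (fun w => √(2 * (w - 1 - log w))) (𝓝 1) (𝓝 0) := by
      have : ContinuousAt (fun w => √(2 * (w - 1 - log w))) 1 :=
        ((continuousAt_id.sub continuousAt_const).sub
          (continuousAt_log one_ne_zero)).const_mul 2 |>.sqrt
      simpa using this.tendsto
    refine ContinuousAt.continuousWithinAt ?_
    rw [ContinuousAt, temmeEta_one]
    exact squeeze_zero_norm (fun w => abs_temmeEta_le) hroot
  · exact (hasDerivAt_temmeEta hv h1).continuousAt.continuousWithinAt

lemma strictMonoOn_temmeEta : StrictMonoOn temmeEta (Ioi 0) := by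
  have hderiv : ∀ x ∈ Ioi (0 : ℝ), x ≠ 1 → 0 < deriv temmeEta x := fun x hx h1 => by
    rw [(hasDerivAt_temmeEta hx h1).deriv, mul_comm, ← div_div]
    exact div_pos (sub_one_div_temmeEta_pos hx h1) hx
  have hleft : StrictMonoOn temmeEta (Ioc 0 1) :=
    strictMonoOn_of_deriv_pos (convex_Ioc 0 1) (continuousOn_temmeEta.mono Ioc_subset_Ioi_self)
      fun x hx => by
        rw [interior_Ioc] at hx
        exact hderiv x hx.1 hx.2.ne
  have hright : StrictMonoOn temmeEta (Ici 1) :=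
    strictMonoOn_of_deriv_pos (convex_Ici 1)
      (continuousOn_temmeEta.mono fun x (hx : 1 ≤ x) => show 0 < x by linarith) fun x hx => by
        rw [interior_Ici] at hx
        exact hderiv x (show 0 < x by linarith [hx.out]) hx.ne'
  rw [← Ioc_union_Ici_eq_Ioi zero_lt_one]
  exact hleft.union hright (isGreatest_Ioc zero_lt_one) isLeast_Ici

lemma sqrt_sub_one_le_temmeEta (hv : 1 ≤ v) : √v - 1 ≤ temmeEta v := by
  rcases hv.eq_or_lt with rfl | h
  · simp
  have hlog : log v ≤ 2 * (√v - 1) := by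
    have := log_le_sub_one_of_pos (sqrt_pos.2 (zero_lt_one.trans h))
    rwa [log_sqrt (zero_lt_one.trans h).le, div_le_iff₀ two_pos, mul_comm] at this
  have hsq : (√v - 1) ^ 2 ≤ 2 * (v - 1 - log v) := by
    nlinarith [sq_sqrt (zero_le_one.trans hv), one_le_sqrt.2 hv]
  rw [temmeEta_of_one_lt h]
  exact le_sqrt_of_sq_le hsq

lemma tendsto_temmeEta_atTop : Tendsto temmeEta atTop atTop :=
  tendsto_atTop_mono' _ ((eventually_ge_atTop 1).mono fun _ => sqrt_sub_one_le_temmeEta)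
    (tendsto_atTop_add_const_right _ _ tendsto_sqrt_atTop)

lemma nine_mul_sq_sub_one_le (hv : 0 < v) :
    9 * (v - 1) ^ 2 ≤ 2 * (v - 1 - log v) * (v + 2) ^ 2 := by
  set F : ℝ → ℝ := fun w => w - 1 - log w - 9 * (w - 1) ^ 2 / (2 * (w + 2) ^ 2)
  have hF : ∀ w, 0 < w → HasDerivAt F ((w - 1) ^ 3 * (w + 8) / (w * (w + 2) ^ 3)) w := by
    intro w hw
    have h2 : 2 * (w + 2) ^ 2 ≠ 0 := by positivity
    have hq := ((((hasDerivAt_id' w).sub_const 1).fun_pow 2).const_mul 9).div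
      ((((hasDerivAt_id' w).add_const 2).fun_pow 2).const_mul 2) h2
    refine ((((hasDerivAt_id' w).sub_const 1).sub (hasDerivAt_log hw.ne')).sub hq).congr_deriv ?_
    field_simp
    ring
  have hpos : ∀ x ∈ uIcc 1 v, 0 < x := fun x hx => by
    rcases le_total 1 v with h | h
    · rw [uIcc_of_le h] at hx; linarith [hx.1]
    · rw [uIcc_of_ge h] at hx; linarith [hx.1]
  have hmin : F 1 ≤ F v := le_of_hasDerivAt_of_deriv_mul_sub_nonneg
    (fun x hx => hF x (hpos x hx)) fun x hx => by
      have hx0 := hpos x hx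
      rw [div_mul_eq_mul_div]
      refine div_nonneg ?_ (by positivity)
      nlinarith [pow_two_nonneg ((x - 1) ^ 2), mul_nonneg (pow_two_nonneg ((x - 1) ^ 2))
        (by linarith : (0 : ℝ) ≤ x + 8)]
  have h2 : 0 < 2 * (v + 2) ^ 2 := by positivity
  simp only [F, sub_self, log_one, ne_eq, OfNat.ofNat_ne_zero, not_false_eq_true,
    zero_pow, mul_zero, zero_div] at hmin
  rw [sub_nonneg, div_le_iff₀ h2] at hmin
  linarith

lemma sub_one_div_temmeEta_le (hv : 0 < v) (h1 : v ≠ 1) : (v - 1) / temmeEta v ≤ (v + 2) / 3 := by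
  have hq := sub_one_div_temmeEta_pos hv h1
  have hη : temmeEta v ^ 2 ≠ 0 := pow_ne_zero 2 (div_pos_iff.1 hq |>.elim
    (fun h => h.2.ne') fun h => h.2.ne)
  rw [← pow_le_pow_iff_left₀ hq.le (by linarith) two_ne_zero, div_pow, div_pow,
    div_le_div_iff₀ (lt_of_le_of_ne (sq_nonneg _) hη.symm) (by norm_num), temmeEta_sq hv]
  linarith [nine_mul_sq_sub_one_le hv]

lemma deriv_temmeEta_mul_le (hv : 0 < v) (h1 : v ≠ 1) :
    (v - 1) / (v * temmeEta v) * (1 - temmeEta v / 3) ≤ 1 / v := by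
  have hη : temmeEta v ≠ 0 := fun h => by simpa [h] using sub_one_div_temmeEta_pos hv h1
  have heq : (v - 1) / (v * temmeEta v) * (1 - temmeEta v / 3)
      = ((v - 1) / temmeEta v - (v - 1) / 3) / v := by
    field_simp
  rw [heq]
  gcongr
  linarith [sub_one_div_temmeEta_le hv h1]

end TemmeEta

lemma integrable_exp_neg_sq_div_two : Integrable fun y : ℝ => exp (-y ^ 2 / 2) := by
  simpa [neg_div, div_eq_inv_mul] using integrable_exp_neg_mul_sq (b := 1 / 2) (by norm_num)

lemma integrable_mul_exp_neg_sq_div_two : Integrable fun y : ℝ => y * exp (-y ^ 2 / 2) := by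
  simpa [neg_div, div_eq_inv_mul] using integrable_mul_exp_neg_mul_sq (b := 1 / 2) (by norm_num)

lemma integrable_exp_neg_sq_div_two_mul_one_sub (c : ℝ) :
    Integrable fun y : ℝ => exp (-y ^ 2 / 2) * (1 - c * y) :=
  (integrable_exp_neg_sq_div_two.sub (integrable_mul_exp_neg_sq_div_two.const_mul c)).congr
    (Eventually.of_forall fun y => by simp only [Pi.sub_apply]; ring)

lemma integral_Ioi_mul_exp_neg_sq_div_two (a : ℝ) :
    ∫ y in Ioi a, y * exp (-y ^ 2 / 2) = exp (-a ^ 2 / 2) := by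
  have hderiv : ∀ y ∈ Ici a, HasDerivAt (fun y => -exp (-y ^ 2 / 2)) (y * exp (-y ^ 2 / 2)) y :=
    fun y _ => ((((hasDerivAt_id' y).fun_pow 2).fun_neg.div_const 2).exp.fun_neg).congr_deriv
      (by ring)
  have hlim : Tendsto (fun y : ℝ => -y ^ 2 / 2) atTop atBot := by
    simpa [Function.comp_def, neg_div] using tendsto_neg_atTop_atBot.comp
      ((tendsto_pow_atTop (α := ℝ) two_ne_zero).atTop_div_const two_pos)
  rw [integral_Ioi_of_hasDerivAt_of_tendsto' hderiv integrable_mul_exp_neg_sq_div_two.integrableOn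
    (by simpa using (tendsto_exp_atBot.comp hlim).neg)]
  simp

lemma integral_Ioi_exp_neg_sq_div_two_mul_one_sub (a c : ℝ) :
    ∫ y in Ioi a, exp (-y ^ 2 / 2) * (1 - c * y)
      = (∫ y in Iic (-a), exp (-y ^ 2 / 2)) - c * exp (-a ^ 2 / 2) := by
  have hmirror : ∫ y in Ioi a, exp (-y ^ 2 / 2) = ∫ y in Iic (-a), exp (-y ^ 2 / 2) := by
    have := integral_comp_neg_Iic (-a) fun y => exp (-y ^ 2 / 2)
    simp only [neg_neg, neg_sq] at this
    exact this.symm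
  simp only [mul_sub, mul_one]
  rw [integral_sub integrable_exp_neg_sq_div_two.integrableOn
    ((integrable_mul_exp_neg_sq_div_two.const_mul c).integrableOn.congr_fun
      (fun y _ => by ring) measurableSet_Ioi), hmirror, ← integral_Ioi_mul_exp_neg_sq_div_two a,
    ← integral_const_mul]
  congr 2 with y
  ring

lemma stdGaussianCDF_div_stdGaussianPDF (x : ℝ) :
    stdGaussianCDF x / stdGaussianPDF x = exp (x ^ 2 / 2) * ∫ y in Iic x, exp (-y ^ 2 / 2) := by
  have hexp : exp (-x ^ 2 / 2) = (exp (x ^ 2 / 2))⁻¹ := by rw [← exp_neg, neg_div]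
  simp only [stdGaussianCDF, stdGaussianPDF, integral_div, hexp]
  field_simp

lemma stdGaussianCDF_div_stdGaussianPDF_nonneg (x : ℝ) :
    0 ≤ stdGaussianCDF x / stdGaussianPDF x := by
  rw [stdGaussianCDF_div_stdGaussianPDF]
  exact mul_nonneg (exp_pos _).le (integral_nonneg fun _ => (exp_pos _).le)

section GaussianComparison

variable {s v : ℝ}

lemma exp_neg_sq_sqrt_mul_temmeEta_div_two (hs : 0 ≤ s) (hv : 0 < v) :
    exp (-(√s * temmeEta v) ^ 2 / 2) = exp s * (v ^ s * exp (-s * v)) := by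
  rw [mul_pow, sq_sqrt hs, temmeEta_sq hv, rpow_def_of_pos hv, ← exp_add, ← exp_add]
  congr 1
  ring

lemma abs_deriv_mul_exp_neg_sq_mul_one_sub_le (hs : 0 < s) (hv : 0 < v) (h1 : v ≠ 1) :
    |√s * ((v - 1) / (v * temmeEta v))| *
        (exp (-(√s * temmeEta v) ^ 2 / 2) * (1 - (3 * √s)⁻¹ * (√s * temmeEta v)))
      ≤ √s * exp s * (v ^ (s - 1) * exp (-s * v)) := by
  have hsqrt : 0 < √s := sqrt_pos.2 hs
  have hderiv : 0 < (v - 1) / (v * temmeEta v) := by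
    rw [mul_comm, ← div_div]
    exact div_pos (sub_one_div_temmeEta_pos hv h1) hv
  have hthird : (3 * √s)⁻¹ * (√s * temmeEta v) = temmeEta v / 3 := by
    field_simp
  rw [abs_of_pos (mul_pos hsqrt hderiv), hthird, exp_neg_sq_sqrt_mul_temmeEta_div_two hs.le hv,
    rpow_sub_one hv.ne']
  calc √s * ((v - 1) / (v * temmeEta v)) * (exp s * (v ^ s * exp (-s * v)) * (1 - temmeEta v / 3))
      = √s * exp s * (v ^ s * exp (-s * v)) *
          ((v - 1) / (v * temmeEta v) * (1 - temmeEta v / 3)) := by ring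
    _ ≤ √s * exp s * (v ^ s * exp (-s * v)) * (1 / v) := by
        gcongr
        exact deriv_temmeEta_mul_le hv h1
    _ = √s * exp s * (v ^ s / v * exp (-s * v)) := by ring

lemma integral_Ioi_exp_neg_sq_div_two_mul_one_sub_le (hs : 0 < s) {v₀ : ℝ} (hv₀ : 0 < v₀) :
    ∫ y in Ioi (√s * temmeEta v₀), exp (-y ^ 2 / 2) * (1 - (3 * √s)⁻¹ * y)
      ≤ √s * exp s * ∫ v in Ioi v₀, v ^ (s - 1) * exp (-s * v) := by
  set F : ℝ → ℝ := fun v => √s * temmeEta v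
  set G : ℝ → ℝ := fun y => exp (-y ^ 2 / 2) * (1 - (3 * √s)⁻¹ * y)
  -- `hasDerivAt_temmeEta` needs `v ≠ 1`; removing that point changes no integral.
  set S : Set ℝ := Ioi v₀ \ {1}
  have hS : MeasurableSet S := measurableSet_Ioi.diff (measurableSet_singleton 1)
  have hsqrt : 0 < √s := sqrt_pos.2 hs
  have hpos : ∀ v ∈ Ioi v₀, 0 < v := fun v hv => hv₀.trans hv
  have hmono : StrictMonoOn F (Ioi 0) := fun a ha b hb hab =>
    mul_lt_mul_of_pos_left (strictMonoOn_temmeEta ha hb hab) hsqrt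
  have hF' : ∀ v ∈ S, HasDerivWithinAt F (√s * ((v - 1) / (v * temmeEta v))) S v :=
    fun v hv => ((hasDerivAt_temmeEta (hpos v hv.1) hv.2).const_mul √s).hasDerivWithinAt
  have hinj : InjOn F S := (hmono.mono fun v hv => hpos v hv.1).injOn
  have himage : F '' Ioi v₀ = Ioi (F v₀) :=
    (hmono.mono fun v (hv : v₀ ≤ v) => hv₀.trans_le hv).image_Ioi_eq_Ioi
      ((continuousOn_temmeEta.const_smul √s).mono fun v (hv : v₀ ≤ v) => hv₀.trans_le hv)
      (tendsto_temmeEta_atTop.const_mul_atTop hsqrt)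
  have hnull : volume (F '' (Ioi v₀ ∩ {1})) = 0 :=
    measure_mono_null (image_mono inter_subset_right) (by simp)
  have hSae : F '' S =ᵐ[volume] Ioi (F v₀) := by
    rw [(hmono.mono fun v hv => hpos v hv).injOn.image_sdiff, himage]
    exact sdiff_null_ae_eq_self hnull
  have hint : IntegrableOn (fun v => v ^ (s - 1) * exp (-s * v)) (Ioi v₀) :=
    (integrableOn_rpow_mul_exp_neg_mul (by linarith) hs).mono_set (Ioi_subset_Ioi hv₀.le)
  calc ∫ y in Ioi (F v₀), G y
      = ∫ y in F '' S, G y := setIntegral_congr_set hSae.symm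
    _ = ∫ v in S, |√s * ((v - 1) / (v * temmeEta v))| • G (F v) :=
        integral_image_eq_integral_abs_deriv_smul hS hF' hinj G
    _ ≤ ∫ v in S, √s * exp s * (v ^ (s - 1) * exp (-s * v)) := by
        refine setIntegral_mono_on ?_
          (IntegrableOn.mono_set (hint.const_mul (√s * exp s)) sdiff_subset) hS fun v hv =>
            abs_deriv_mul_exp_neg_sq_mul_one_sub_le hs (hpos v hv.1) hv.2
        exact (integrableOn_image_iff_integrableOn_abs_deriv_smul hS hF' hinj G).1
          (integrable_exp_neg_sq_div_two_mul_one_sub _).integrableOn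
    _ = √s * exp s * ∫ v in Ioi v₀, v ^ (s - 1) * exp (-s * v) := by
        rw [integral_const_mul]
        exact congrArg _ (setIntegral_congr_set (sdiff_null_ae_eq_self (measure_singleton 1)))

end GaussianComparison

section AffineSubstitution

variable {b : ℝ} (g : ℝ → ℝ)

lemma image_mul_one_add_Ioi (hb : 0 < b) : (fun t => b * (1 + t)) '' Ioi 0 = Ioi b := by
  rw [show (fun t => b * (1 + t)) = (b * ·) ∘ (1 + ·) from rfl, image_comp, image_const_add_Ioi,
    image_mul_left_Ioi hb, add_zero, mul_one]

lemma hasDerivWithinAt_mul_one_add (t : ℝ) (S : Set ℝ) :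
    HasDerivWithinAt (fun t => b * (1 + t)) b S t :=
  (((hasDerivAt_id' t).const_add 1).const_mul b).hasDerivWithinAt.congr_deriv (mul_one b)

lemma integrableOn_comp_mul_one_add_Ioi_iff (hb : 0 < b) :
    IntegrableOn (fun t => g (b * (1 + t))) (Ioi 0) ↔ IntegrableOn g (Ioi b) := by
  rw [← image_mul_one_add_Ioi hb, integrableOn_image_iff_integrableOn_abs_deriv_smul
    measurableSet_Ioi (fun t _ => hasDerivWithinAt_mul_one_add t _)
    fun x _ y _ h => by simpa [hb.ne'] using h, abs_of_pos hb]
  simp only [smul_eq_mul]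
  exact (integrable_const_mul_iff (isUnit_iff_ne_zero.2 hb.ne') _).symm

lemma integral_comp_mul_one_add_Ioi (hb : 0 < b) :
    ∫ v in Ioi b, g v = b * ∫ t in Ioi 0, g (b * (1 + t)) := by
  rw [← image_mul_one_add_Ioi hb, integral_image_eq_integral_abs_deriv_smul measurableSet_Ioi
    (fun t _ => hasDerivWithinAt_mul_one_add t _) fun x _ y _ h => by simpa [hb.ne'] using h,
    abs_of_pos hb]
  simp only [smul_eq_mul, integral_const_mul]

end AffineSubstitution

section ShiftedGamma

variable {lam s : ℝ}

lemma integrableOn_exp_neg_mul_mul_one_add_rpow {c : ℝ} (hlam : 0 < lam) (hc : -1 < c) :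
    IntegrableOn (fun t => exp (-lam * t) * (1 + t) ^ c) (Ioi 0) := by
  have h := (integrableOn_comp_mul_one_add_Ioi_iff (fun v => v ^ c * exp (-lam * v)) one_pos).2
    ((integrableOn_rpow_mul_exp_neg_mul hc hlam).mono_set (Ioi_subset_Ioi zero_le_one))
  refine IntegrableOn.congr_fun (h.const_mul (exp lam)) (fun t _ => ?_) measurableSet_Ioi
  simp only [one_mul]
  rw [mul_left_comm, ← exp_add, mul_comm]
  ring_nf

lemma integral_Ioi_rpow_mul_exp_neg_mul {ρ : ℝ} (hρ : 0 < ρ) :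
    ∫ v in Ioi ρ, v ^ (s - 1) * exp (-s * v)
      = ρ ^ s * exp (-(s * ρ)) * ∫ t in Ioi 0, exp (-(s * ρ) * t) * (1 + t) ^ (s - 1) := by
  rw [integral_comp_mul_one_add_Ioi _ hρ, ← integral_const_mul, ← integral_const_mul]
  refine setIntegral_congr_fun measurableSet_Ioi fun t (ht : 0 < t) => ?_
  rw [mul_rpow hρ.le (by linarith), rpow_sub_one hρ.ne' s]
  field_simp
  rw [← exp_add]
  ring_nf

lemma mul_integral_mul_exp_neg_mul_mul_one_add_rpow (hlam : 0 < lam) (hs : 0 < s) :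
    lam * ∫ t in Ioi 0, t * exp (-lam * t) * (1 + t) ^ (s - 1)
      = 1 + (s - lam) * ∫ t in Ioi 0, exp (-lam * t) * (1 + t) ^ (s - 1) := by
  have hA := integrableOn_exp_neg_mul_mul_one_add_rpow hlam (by linarith : -1 < s - 1)
  have hB := integrableOn_exp_neg_mul_mul_one_add_rpow hlam (by linarith : -1 < s)
  have hderiv : ∀ t ∈ Ici (0 : ℝ), HasDerivAt (fun t => exp (-lam * t) * (1 + t) ^ s)
      (s * (exp (-lam * t) * (1 + t) ^ (s - 1)) - lam * (exp (-lam * t) * (1 + t) ^ s)) t := by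
    intro t (ht : 0 ≤ t)
    have hpow := ((hasDerivAt_id' t).const_add 1).rpow_const (p := s) (Or.inl (by linarith))
    exact (((hasDerivAt_id' t).const_mul (-lam)).exp.mul hpow).congr_deriv (by ring)
  have hlim : Tendsto (fun t => exp (-lam * t) * (1 + t) ^ s) atTop (𝓝 0) := by
    have := ((tendsto_rpow_mul_exp_neg_mul_atTop_nhds_zero s lam hlam).comp
      (tendsto_atTop_add_const_left atTop 1 tendsto_id)).const_mul (exp lam)
    rw [mul_zero] at this
    refine this.congr fun t => ?_
    simp only [Function.comp_apply, id]
    rw [mul_left_comm, ← exp_add, mul_comm]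
    ring_nf
  have hparts := integral_Ioi_of_hasDerivAt_of_tendsto' hderiv
    ((hA.const_mul s).sub (hB.const_mul lam)) hlim
  rw [integral_sub (hA.const_mul s) (hB.const_mul lam), integral_const_mul, integral_const_mul]
    at hparts
  have hsplit : ∫ t in Ioi 0, t * exp (-lam * t) * (1 + t) ^ (s - 1)
      = (∫ t in Ioi 0, exp (-lam * t) * (1 + t) ^ s)
        - ∫ t in Ioi 0, exp (-lam * t) * (1 + t) ^ (s - 1) := by
    rw [← integral_sub hB hA]
    refine setIntegral_congr_fun measurableSet_Ioi fun t (ht : 0 < t) => ?_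
    rw [rpow_sub_one (by linarith : (1 + t) ≠ 0)]
    field_simp
    ring
  simp only [mul_zero, exp_zero, add_zero, one_rpow, mul_one, zero_sub] at hparts
  rw [hsplit]
  linarith

end ShiftedGamma

lemma stdGaussianCDF_div_stdGaussianPDF_sub_le {s ρ : ℝ} (hs : 0 < s) (hρ0 : 0 < ρ) (hρ1 : ρ < 1) :
    stdGaussianCDF √(-2 * s * (1 - ρ + log ρ)) / stdGaussianPDF √(-2 * s * (1 - ρ + log ρ))
        - (3 * √s)⁻¹
      ≤ √s * ∫ t in Ioi 0, exp (-(s * ρ) * t) * (1 + t) ^ (s - 1) := by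
  set α := √(-2 * s * (1 - ρ + log ρ))
  set A := ∫ t in Ioi 0, exp (-(s * ρ) * t) * (1 + t) ^ (s - 1)
  have hψ : 0 ≤ ρ - 1 - log ρ := by linarith [log_le_sub_one_of_pos hρ0]
  have hα : √s * temmeEta ρ = -α := by
    rw [temmeEta_of_lt_one hρ1, mul_neg, ← sqrt_mul hs.le]
    simp only [α]
    ring_nf
  have hcancel : exp (α ^ 2 / 2) * (exp s * (ρ ^ s * exp (-(s * ρ)))) = 1 := by
    rw [sq_sqrt (by nlinarith), rpow_def_of_pos hρ0, ← exp_add, ← exp_add, ← exp_add,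
      exp_eq_one_iff]
    ring
  have hbound := integral_Ioi_exp_neg_sq_div_two_mul_one_sub_le hs hρ0
  rw [hα, integral_Ioi_exp_neg_sq_div_two_mul_one_sub, neg_neg, neg_sq,
    integral_Ioi_rpow_mul_exp_neg_mul hρ0] at hbound
  have hscaled := mul_le_mul_of_nonneg_left hbound (exp_pos (α ^ 2 / 2)).le
  rw [stdGaussianCDF_div_stdGaussianPDF]
  calc exp (α ^ 2 / 2) * (∫ y in Iic α, exp (-y ^ 2 / 2)) - (3 * √s)⁻¹
      = exp (α ^ 2 / 2) * ((∫ y in Iic α, exp (-y ^ 2 / 2)) - (3 * √s)⁻¹ * exp (-α ^ 2 / 2)) := by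
        rw [mul_sub, mul_left_comm, ← exp_add, neg_div, add_neg_cancel, exp_zero, mul_one]
    _ ≤ exp (α ^ 2 / 2) * (√s * exp s * (ρ ^ s * exp (-(s * ρ)) * A)) := hscaled
    _ = √s * A * (exp (α ^ 2 / 2) * (exp s * (ρ ^ s * exp (-(s * ρ))))) := by ring
    _ = √s * A := by rw [hcancel, mul_one]

/-- Upper bound on the (extended) Erlang C formula. -/
theorem erlangCExt_upper_bound (s lam : ℝ) (h0 : 0 < lam) (hlt : lam < s)
    (ρ α γ : ℝ) (hρ : ρ = lam / s)
    (hα : α = Real.sqrt (-2 * s * (1 - ρ + Real.log ρ)))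
    (hγ : γ = (1 - ρ) * Real.sqrt s) :
    erlangCExt s lam ≤
      (ρ + γ * (stdGaussianCDF α / stdGaussianPDF α + (2 / 3) * (1 / Real.sqrt s)))⁻¹ := by
  have hs : 0 < s := h0.trans hlt
  have hsqrt : 0 < √s := sqrt_pos.2 hs
  have hρ0 : 0 < ρ := hρ ▸ div_pos h0 hs
  have hρ1 : ρ < 1 := hρ ▸ (div_lt_one hs).2 hlt
  have hlam : lam = s * ρ := by rw [hρ]; field_simp
  have hγ0 : 0 < γ := hγ ▸ mul_pos (by linarith) hsqrt
  have hmills := stdGaussianCDF_div_stdGaussianPDF_sub_le hs hρ0 hρ1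
  rw [← hα, ← hlam] at hmills
  set R := stdGaussianCDF α / stdGaussianPDF α
  set A := ∫ t in Ioi 0, exp (-lam * t) * (1 + t) ^ (s - 1)
  have hR : 0 ≤ R := stdGaussianCDF_div_stdGaussianPDF_nonneg α
  have hγc : γ * (3 * √s)⁻¹ = (1 - ρ) / 3 := by rw [hγ]; field_simp
  have hγs : γ * √s = s - lam := by rw [hγ, hlam, mul_assoc, mul_self_sqrt hs.le]; ring
  have hγt : γ * (2 / 3 * (1 / √s)) = 2 * (1 - ρ) / 3 := by rw [hγ]; field_simp
  have hγR : γ * R ≤ (1 - ρ) / 3 + (s - lam) * A := by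
    have := mul_le_mul_of_nonneg_left hmills hγ0.le
    rw [mul_sub, hγc, ← mul_assoc, hγs] at this
    linarith
  rw [erlangCExt, mul_integral_mul_exp_neg_mul_mul_one_add_rpow h0 hs]
  refine inv_anti₀ (by positivity) ?_
  rw [mul_add, hγt]
  linarith
end

section
/- For all reals s, λ with s > λ > 0, the three parameters γ = (s−λ)/√s, α = √(−2s(1 − ρ + ln ρ)) with ρ = λ/s, and β = (s−λ)/√λ satisfy the strict ordering γ < α < β. -/
/-!
With `ρ = λ/s ∈ (0, 1)` one has `γ² = s(1 − ρ)²`, `α² = 2s(ρ − 1 − ln ρ)` and `β² = s(1 − ρ)²/ρ`,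
so the claim reduces to `(1 − ρ)²/2 < ρ − 1 − ln ρ < (1 − ρ)²/(2ρ)`. The left inequality holds
because `−ln(1 − t) = ∑ tⁿ/n` (at `t = 1 − ρ`) has positive terms; the right one is
`sinh u < u` for `u = ln ρ < 0`, since `sinh (ln ρ) = (ρ − ρ⁻¹)/2`.
-/

open Real Finset

lemma add_sq_div_two_lt_neg_log_one_sub {t : ℝ} (h0 : 0 < t) (h1 : t < 1) :
    t + t ^ 2 / 2 < -log (1 - t) := by
  have hsum := hasSum_pow_div_log_of_abs_lt_one (abs_lt.2 ⟨by linarith, h1⟩)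
  have hpartial : ∑ n ∈ range 3, t ^ (n + 1) / (n + 1) ≤ -log (1 - t) :=
    sum_le_hasSum _ (fun n _ => by positivity) hsum
  simp only [sum_range_succ, sum_range_zero] at hpartial
  norm_num at hpartial
  nlinarith [pow_pos h0 3]

lemma half_sub_inv_lt_log {x : ℝ} (h0 : 0 < x) (h1 : x < 1) : (x - x⁻¹) / 2 < log x := by
  rw [← sinh_log h0, sinh_lt_self_iff]
  exact log_neg h0 h1

lemma sq_one_sub_lt_two_mul_sub_one_sub_log {ρ : ℝ} (h0 : 0 < ρ) (h1 : ρ < 1) :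
    (1 - ρ) ^ 2 < 2 * (ρ - 1 - log ρ) := by
  have := add_sq_div_two_lt_neg_log_one_sub (t := 1 - ρ) (by linarith) (by linarith)
  rw [sub_sub_cancel] at this
  linarith

lemma two_mul_sub_one_sub_log_lt_sq_one_sub_div {ρ : ℝ} (h0 : 0 < ρ) (h1 : ρ < 1) :
    2 * (ρ - 1 - log ρ) < (1 - ρ) ^ 2 / ρ := by
  have hlog := half_sub_inv_lt_log h0 h1
  have hsq : (1 - ρ) ^ 2 / ρ = 2 * (ρ - 1) - (ρ - ρ⁻¹) := by field_simp; ring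
  rw [hsq]
  linarith

/-- The ordering `γ < α < β` of the three QED parameters
`γ = (s−λ)/√s`, `α = √(−2s(1 − ρ + ln ρ))` with `ρ = λ/s`, and `β = (s−λ)/√λ`. -/
theorem qed_parameters_strict_ordering (s lam : ℝ) (h0 : 0 < lam) (hlt : lam < s)
    (ρ α β γ : ℝ) (hρ : ρ = lam / s)
    (hα : α = Real.sqrt (-2 * s * (1 - ρ + Real.log ρ)))
    (hβ : β = (s - lam) / Real.sqrt lam)
    (hγ : γ = (s - lam) / Real.sqrt s) :
    γ < α ∧ α < β := by
  have hs : 0 < s := h0.trans hlt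
  have hρ0 : 0 < ρ := hρ ▸ div_pos h0 hs
  have hρ1 : ρ < 1 := hρ ▸ (div_lt_one hs).2 hlt
  have hlam : lam = s * ρ := by rw [hρ]; field_simp
  have hγ_sq : γ ^ 2 = s * (1 - ρ) ^ 2 := by
    rw [hγ, div_pow, sq_sqrt hs.le, hlam]; field_simp
  have hβ_sq : β ^ 2 = s * ((1 - ρ) ^ 2 / ρ) := by
    rw [hβ, div_pow, sq_sqrt h0.le, hlam]; field_simp
  have hα_arg : -2 * s * (1 - ρ + log ρ) = s * (2 * (ρ - 1 - log ρ)) := by ring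
  rw [hα, hα_arg]
  constructor
  · rw [lt_sqrt (hγ ▸ div_nonneg (by linarith) (sqrt_nonneg s)), hγ_sq]
    exact mul_lt_mul_of_pos_left (sq_one_sub_lt_two_mul_sub_one_sub_log hρ0 hρ1) hs
  · rw [sqrt_lt' (hβ ▸ div_pos (by linarith) (sqrt_pos.2 h0)), hβ_sq]
    exact mul_lt_mul_of_pos_left (two_mul_sub_one_sub_log_lt_sq_one_sub_div hρ0 hρ1) hs
end
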